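/- arXiv:2307.15102 — 4 statements merged into one kernel-verified Lean document; each statement's English description precedes it below -/
import Mathlib

section
/- Let I ⊆ ℝ be an interval, n ∈ ℕ, A : I → ℂ^{n×n} a continuous matrix function, f : I → ℂ^n a continuous vector function, and fix a norm ‖·‖ on ℂ^n. Then the inhomogeneous equation x' = A(t)x + f(t) is Ulam stable on I with Ulam constant K if and only if the homogeneous equation x' = A(t)x is Ulam stable on I with the same Ulam constant K. -/
/-
If `u` solves `x' = A(t) x + g(t) - f(t)` on `I`, then `φ ↦ φ - u` turns `ε`-approximate solutions
of the `g`-equation into `ε`-approximate solutions of the `f`-equation, and `x ↦ x + u` turns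
solutions of the `f`-equation into solutions of the `g`-equation, without changing the distances
`φ - x`. Hence Ulam stability with constant `K` does not depend on the forcing term. Such a `u`
exists on the whole interval `I` because linear equations have global solutions: on a compact
interval they are built from Picard–Lindelöf steps whose length depends only on a Lipschitz
bound of `A`, and on `I` these local solutions fit together by uniqueness.
-/

open MeasureTheory Filter Set

noncomputable section

/-- `N` is a norm on `ℂⁿ`. -/
def IsNormCn (n : ℕ) (N : (Fin n → ℂ) → ℝ) : Prop :=
  (∀ v, 0 ≤ N v) ∧
  (∀ v, N v = 0 ↔ v = 0) ∧
  (∀ (c : ℂ) (v), N (c • v) = ‖c‖ * N v) ∧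
  (∀ v w, N (v + w) ≤ N v + N w)

/-- Ulam stability on `I` with constant `K` (with respect to the norm `N` on `ℂⁿ`)
for the inhomogeneous linear system `x' = A(t) x + f(t)`. -/
def UlamStableCn (n : ℕ) (N : (Fin n → ℂ) → ℝ) (I : Set ℝ)
    (A : ℝ → Matrix (Fin n) (Fin n) ℂ) (f : ℝ → Fin n → ℂ) (K : ℝ) : Prop :=
  0 < K ∧
  ∀ ε : ℝ, 0 < ε →
    ∀ φ φd : ℝ → Fin n → ℂ,
      (∀ t ∈ I, HasDerivWithinAt φ (φd t) I t) →
      ContinuousOn φd I →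
      (∀ t ∈ I, N (φd t - (A t).mulVec (φ t) - f t) ≤ ε) →
      ∃ x : ℝ → Fin n → ℂ,
        (∀ t ∈ I, HasDerivWithinAt x ((A t).mulVec (x t) + f t) I t) ∧
        ∀ t ∈ I, N (φ t - x t) ≤ K * ε

open Metric Topology NNReal

theorem exists_Icc_mem_nhdsWithin {I : Set ℝ} {t : ℝ} (ht : t ∈ I) :
    ∃ a ∈ I, ∃ b ∈ I, a ≤ t ∧ t ≤ b ∧ Icc a b ∈ 𝓝[I] t := by
  have lower : ∃ a ∈ I, a ≤ t ∧ ∀ᶠ s in 𝓝[I] t, a ≤ s := by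
    by_cases h : ∃ a ∈ I, a < t
    · obtain ⟨a, ha, hat⟩ := h
      exact ⟨a, ha, hat.le, eventually_nhdsWithin_of_eventually_nhds (eventually_ge_nhds hat)⟩
    · push Not at h
      exact ⟨t, ht, le_rfl, eventually_nhdsWithin_of_forall h⟩
  have upper : ∃ b ∈ I, t ≤ b ∧ ∀ᶠ s in 𝓝[I] t, s ≤ b := by
    by_cases h : ∃ b ∈ I, t < b
    · obtain ⟨b, hb, htb⟩ := h
      exact ⟨b, hb, htb.le, eventually_nhdsWithin_of_eventually_nhds (eventually_le_nhds htb)⟩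
    · push Not at h
      exact ⟨t, ht, le_rfl, eventually_nhdsWithin_of_forall h⟩
  obtain ⟨a, ha, hat, ha'⟩ := lower
  obtain ⟨b, hb, htb, hb'⟩ := upper
  exact ⟨a, ha, b, hb, hat, htb, ha'.and hb'⟩

section IntegralCurves

variable {E : Type*} [NormedAddCommGroup E] [NormedSpace ℝ E]
  {v : ℝ → E → E} {γ γ₁ γ₂ : ℝ → E} {K : ℝ≥0} {a b c t₀ : ℝ}

theorem IsIntegralCurveOn.eqOn_Icc (hv : ∀ t ∈ Icc a b, LipschitzWith K (v t))
    (hγ₁ : IsIntegralCurveOn γ₁ v (Icc a b)) (hγ₂ : IsIntegralCurveOn γ₂ v (Icc a b))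
    (ht₀ : t₀ ∈ Icc a b) (h : γ₁ t₀ = γ₂ t₀) : EqOn γ₁ γ₂ (Icc a b) := by
  have hv' : ∀ t ∈ Icc a b, LipschitzOnWith K (v t) univ := fun t ht => (hv t ht).lipschitzOnWith
  have right : ∀ γ, IsIntegralCurveOn γ v (Icc a b) →
      ∀ t ∈ Ico t₀ b, HasDerivWithinAt γ (v t (γ t)) (Ici t) t := fun γ hγ t ht =>
    (hγ t ⟨ht₀.1.trans ht.1, ht.2.le⟩).mono_of_mem_nhdsWithin <|
      mem_of_superset (Icc_mem_nhdsGE ht.2) (Icc_subset_Icc_left (ht₀.1.trans ht.1))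
  have left : ∀ γ, IsIntegralCurveOn γ v (Icc a b) →
      ∀ t ∈ Ioc a t₀, HasDerivWithinAt γ (v t (γ t)) (Iic t) t := fun γ hγ t ht =>
    (hγ t ⟨ht.1.le, ht.2.trans ht₀.2⟩).mono_of_mem_nhdsWithin <|
      mem_of_superset (Icc_mem_nhdsLE ht.1) (Icc_subset_Icc_right (ht.2.trans ht₀.2))
  rw [← Icc_union_Icc_eq_Icc ht₀.1 ht₀.2]
  refine EqOn.union ?_ ?_
  · exact ODE_solution_unique_of_mem_Icc_left
      (fun t ht => hv' t ⟨ht.1.le, ht.2.trans ht₀.2⟩)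
      (hγ₁.continuousOn.mono (Icc_subset_Icc_right ht₀.2)) (left γ₁ hγ₁) (fun _ _ => mem_univ _)
      (hγ₂.continuousOn.mono (Icc_subset_Icc_right ht₀.2)) (left γ₂ hγ₂) (fun _ _ => mem_univ _) h
  · exact ODE_solution_unique_of_mem_Icc_right
      (fun t ht => hv' t ⟨ht₀.1.trans ht.1, ht.2.le⟩)
      (hγ₁.continuousOn.mono (Icc_subset_Icc_left ht₀.1)) (right γ₁ hγ₁) (fun _ _ => mem_univ _)
      (hγ₂.continuousOn.mono (Icc_subset_Icc_left ht₀.1)) (right γ₂ hγ₂) (fun _ _ => mem_univ _) h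

theorem IsIntegralCurveOn.exists_eqOn_union_Icc (hab : a ≤ b) (hbc : b ≤ c)
    (hγ₁ : IsIntegralCurveOn γ₁ v (Icc a b)) (hγ₂ : IsIntegralCurveOn γ₂ v (Icc b c))
    (h : γ₁ b = γ₂ b) :
    ∃ γ, EqOn γ γ₁ (Icc a b) ∧ EqOn γ γ₂ (Icc b c) ∧ IsIntegralCurveOn γ v (Icc a c) := by
  set γ : ℝ → E := fun t => if t ≤ b then γ₁ t else γ₂ t
  have h₁ : EqOn γ γ₁ (Icc a b) := fun t ht => if_pos ht.2
  have h₂ : EqOn γ γ₂ (Icc b c) := fun t ht => by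
    rcases ht.1.eq_or_lt with rfl | hlt
    · exact (if_pos le_rfl).trans h
    · exact if_neg hlt.not_ge
  -- at a point outside a closed set, any derivative within that set is valid
  have extend : ∀ {s} {γ' : ℝ → E}, IsClosed s → EqOn γ γ' s → IsIntegralCurveOn γ' v s →
      ∀ t, HasDerivWithinAt γ (v t (γ t)) s t := fun {s γ'} hs heq hγ' t => by
    by_cases ht : t ∈ s
    · rw [heq ht]; exact (hγ' t ht).congr heq (heq ht)
    · exact HasFDerivWithinAt.of_notMem_closure (hs.closure_eq.symm ▸ ht)
  refine ⟨γ, h₁, h₂, fun t _ => ?_⟩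
  rw [← Icc_union_Icc_eq_Icc hab hbc]
  exact (extend isClosed_Icc h₁ hγ₁ t).union (extend isClosed_Icc h₂ hγ₂ t)

end IntegralCurves

section Existence

variable {E : Type*} [NormedAddCommGroup E] [NormedSpace ℝ E] [CompleteSpace E]
  {v : ℝ → E → E} {K : ℝ≥0} {I : Set ℝ} {a b t₀ : ℝ}

theorem exists_isIntegralCurveOn_Icc_of_mul_le (hv : ∀ x, ContinuousOn (v · x) (Icc a b))
    (hK : ∀ t ∈ Icc a b, LipschitzWith K (v t)) (hlen : K * (b - a) ≤ 1 / 2)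
    (ht₀ : t₀ ∈ Icc a b) (x₀ : E) :
    ∃ γ, γ t₀ = x₀ ∧ IsIntegralCurveOn γ v (Icc a b) := by
  obtain ⟨C, hC⟩ := isCompact_Icc.exists_bound_of_continuousOn (hv x₀)
  -- on a ball of radius `R` the field is bounded by `C + K R`, and with `K (b - a) ≤ 1/2`
  -- this radius is large enough for the whole interval
  set R : ℝ≥0 := 2 * C.toNNReal * (b - a).toNNReal
  have hab : 0 ≤ b - a := sub_nonneg.2 (ht₀.1.trans ht₀.2)
  have hba : ((b - a).toNNReal : ℝ) = b - a := Real.coe_toNNReal _ hab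
  have hpl : IsPicardLindelof v ⟨t₀, ht₀⟩ x₀ R 0 (C.toNNReal + K * R) K :=
    { lipschitzOnWith := fun t ht => (hK t ht).lipschitzOnWith
      continuousOn := fun x _ => hv x
      norm_le := fun t ht x hx => by
        have hdist : dist (v t x) (v t x₀) ≤ K * R :=
          ((hK t ht).dist_le_mul x x₀).trans (by gcongr; exact mem_closedBall.1 hx)
        calc ‖v t x‖ ≤ ‖v t x₀‖ + K * R := norm_le_of_mem_closedBall hdist
          _ ≤ C.toNNReal + K * R := by gcongr; exact (hC t ht).trans (Real.le_coe_toNNReal C)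
      mul_max_le := by
        have hC₀ : (0 : ℝ) ≤ C.toNNReal := C.toNNReal.2
        simp only [NNReal.coe_add, NNReal.coe_mul, NNReal.coe_zero, sub_zero, R,
          NNReal.coe_ofNat, hba]
        calc (C.toNNReal + K * (2 * C.toNNReal * (b - a))) * max (b - t₀) (t₀ - a)
            ≤ (C.toNNReal + K * (2 * C.toNNReal * (b - a))) * (b - a) := by
              gcongr; exact max_le (by linarith [ht₀.1]) (by linarith [ht₀.2])
          _ = C.toNNReal * (b - a) * (1 + 2 * (K * (b - a))) := by ring
          _ ≤ C.toNNReal * (b - a) * 2 := by gcongr; linarith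
          _ = 2 * C.toNNReal * (b - a) := by ring }
  exact hpl.exists_eq_forall_mem_Icc_hasDerivWithinAt₀

theorem exists_isIntegralCurveOn_Icc (hv : ∀ x, ContinuousOn (v · x) (Icc a b))
    (hK : ∀ t ∈ Icc a b, LipschitzWith K (v t)) (ht₀ : t₀ ∈ Icc a b) (x₀ : E) :
    ∃ γ, γ t₀ = x₀ ∧ IsIntegralCurveOn γ v (Icc a b) := by
  set h : ℝ := 1 / (2 * K + 1)
  have hh : 0 < h := by positivity
  have step : ∀ {c d}, a ≤ c → d ≤ b → d - c ≤ h → ∀ s ∈ Icc c d, ∀ x : E,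
      ∃ γ, γ s = x ∧ IsIntegralCurveOn γ v (Icc c d) := fun hac hdb hcd s hs x =>
    have hsub : Icc _ _ ⊆ Icc a b := Icc_subset_Icc hac hdb
    exists_isIntegralCurveOn_Icc_of_mul_le (fun y => (hv y).mono hsub)
      (fun t ht => hK t (hsub ht))
      (calc K * (_ - _) ≤ K * h := by gcongr
        _ ≤ 1 / 2 := by rw [mul_one_div, div_le_div_iff₀ (by positivity) two_pos]; linarith)
      hs x
  -- the solution is grown by one step of length `h` on each side at a time
  set lo : ℕ → ℝ := fun m => max (t₀ - m * h) a
  set hi : ℕ → ℝ := fun m => min (t₀ + m * h) b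
  have hmh : ∀ m : ℕ, 0 ≤ m * h := fun m => mul_nonneg m.cast_nonneg hh.le
  have hlo : ∀ m : ℕ, a ≤ lo (m + 1) ∧ lo (m + 1) ≤ lo m ∧ lo m ≤ lo (m + 1) + h ∧ lo m ≤ t₀ :=
    fun m => by
      simp only [lo, Nat.cast_succ]
      refine ⟨le_max_right _ _, max_le_max (by linarith) le_rfl, ?_,
        max_le (by linarith [hmh m]) ht₀.1⟩
      rw [← max_add_add_right]
      exact max_le_max (by linarith) (by linarith)
  have hhi : ∀ m : ℕ, hi (m + 1) ≤ b ∧ hi m ≤ hi (m + 1) ∧ hi (m + 1) ≤ hi m + h ∧ t₀ ≤ hi m :=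
    fun m => by
      simp only [hi, Nat.cast_succ]
      refine ⟨min_le_right _ _, min_le_min (by linarith) le_rfl, ?_,
        le_min (by linarith [hmh m]) ht₀.2⟩
      rw [← min_add_add_right]
      exact min_le_min (by linarith) (by linarith)
  have grow : ∀ m : ℕ, ∃ γ, γ t₀ = x₀ ∧ IsIntegralCurveOn γ v (Icc (lo m) (hi m)) := by
    intro m
    induction m with
    | zero =>
      refine step (c := lo 0) (d := hi 0) (le_max_right _ _) (min_le_right _ _) ?_
        t₀ ⟨(hlo 0).2.2.2, (hhi 0).2.2.2⟩ x₀
      simp only [lo, hi, Nat.cast_zero, zero_mul, sub_zero, add_zero]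
      linarith [le_max_left t₀ a, min_le_left t₀ b]
    | succ m ih =>
      obtain ⟨hlo₁, hlo₂, hlo₃, hlo₄⟩ := hlo m
      obtain ⟨hhi₁, hhi₂, hhi₃, hhi₄⟩ := hhi m
      have hmid : lo m ≤ hi m := hlo₄.trans hhi₄
      obtain ⟨γ, hγ₀, hγ⟩ := ih
      obtain ⟨γl, hγl₀, hγl⟩ := step hlo₁ (hlo₄.trans ht₀.2) (by linarith) _
        (right_mem_Icc.2 hlo₂) (γ (lo m))
      obtain ⟨γr, hγr₀, hγr⟩ := step ((hlo₁.trans hlo₂).trans hmid) hhi₁ (by linarith) _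
        (left_mem_Icc.2 hhi₂) (γ (hi m))
      obtain ⟨γ', hγ'l, hγ'm, hγ'⟩ := hγl.exists_eqOn_union_Icc hlo₂ hmid hγ hγl₀
      obtain ⟨γ'', hγ''l, -, hγ''⟩ := hγ'.exists_eqOn_union_Icc (hlo₂.trans hmid) hhi₂ hγr
        ((hγ'm ⟨hmid, le_rfl⟩).trans hγr₀.symm)
      refine ⟨γ'', ?_, hγ''⟩
      rw [hγ''l ⟨hlo₂.trans hlo₄, hhi₄⟩, hγ'm ⟨hlo₄, hhi₄⟩, hγ₀]
  obtain ⟨m, hm⟩ := exists_nat_ge ((b - a) / h)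
  have hlen : b - a ≤ m * h := (div_le_iff₀ hh).1 hm
  have hlo_m : lo m = a := max_eq_right (by linarith [ht₀.2])
  have hhi_m : hi m = b := min_eq_right (by linarith [ht₀.1])
  simpa only [hlo_m, hhi_m] using grow m

theorem Set.OrdConnected.exists_isIntegralCurveOn (hI : I.OrdConnected)
    (hv : ∀ x, ContinuousOn (v · x) I)
    (hK : ∀ a b, Icc a b ⊆ I → ∃ K, ∀ t ∈ Icc a b, LipschitzWith K (v t))
    (ht₀ : t₀ ∈ I) (x₀ : E) : ∃ γ, γ t₀ = x₀ ∧ IsIntegralCurveOn γ v I := by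
  have solve : ∀ {a b}, Icc a b ⊆ I → t₀ ∈ Icc a b →
      ∃ γ, γ t₀ = x₀ ∧ IsIntegralCurveOn γ v (Icc a b) := fun hsub ht => by
    obtain ⟨K, hK⟩ := hK _ _ hsub
    exact exists_isIntegralCurveOn_Icc (fun x => (hv x).mono hsub) hK ht x₀
  choose! Y hY₀ hY using fun t (ht : t ∈ I) => solve (hI.uIcc_subset ht₀ ht) left_mem_uIcc
  have agree : ∀ {a b γ}, Icc a b ⊆ I → t₀ ∈ Icc a b → γ t₀ = x₀ →
      IsIntegralCurveOn γ v (Icc a b) → EqOn γ (fun t => Y t t) (Icc a b) := by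
    intro a b γ hsub hab hγ₀ hγ t ht
    have hsub' : uIcc t₀ t ⊆ Icc a b := uIcc_subset_Icc hab ht
    obtain ⟨K, hK⟩ := hK _ _ (hsub'.trans hsub)
    exact (hγ.mono hsub').eqOn_Icc hK (hY t (hsub ht)) left_mem_uIcc
      (hγ₀.trans (hY₀ t (hsub ht)).symm) right_mem_uIcc
  refine ⟨fun t => Y t t, hY₀ t₀ ht₀, fun t ht => ?_⟩
  obtain ⟨a, ha, b, hb, hat, htb, hnhds⟩ := exists_Icc_mem_nhdsWithin ht
  have hsub : Icc (min a t₀) (max b t₀) ⊆ I :=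
    hI.out (min_rec' (· ∈ I) ha ht₀) (max_rec' (· ∈ I) hb ht₀)
  obtain ⟨γ, hγ₀, hγ⟩ := solve hsub ⟨min_le_right _ _, le_max_right _ _⟩
  have heq := agree hsub ⟨min_le_right _ _, le_max_right _ _⟩ hγ₀ hγ
  have htab : t ∈ Icc (min a t₀) (max b t₀) :=
    ⟨(min_le_left _ _).trans hat, htb.trans (le_max_left _ _)⟩
  rw [← heq htab]
  exact ((hγ t htab).congr heq.symm (heq htab).symm).mono_of_mem_nhdsWithin
    (mem_of_superset hnhds (Icc_subset_Icc (min_le_left _ _) (le_max_left _ _)))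

theorem Set.OrdConnected.exists_isIntegralCurveOn_clm_apply_add {𝕜 : Type*}
    [NontriviallyNormedField 𝕜] [NormedSpace 𝕜 E] (hI : I.OrdConnected)
    {A : ℝ → E →L[𝕜] E} {f : ℝ → E} (hA : ContinuousOn A I) (hf : ContinuousOn f I) :
    ∃ γ, IsIntegralCurveOn γ (fun t x => A t x + f t) I := by
  rcases I.eq_empty_or_nonempty with rfl | ⟨t₀, ht₀⟩
  · exact ⟨0, fun t ht => ht.elim⟩
  refine (hI.exists_isIntegralCurveOn (v := fun t x => A t x + f t)
    (fun x => (hA.clm_apply continuousOn_const).add hf) (fun a b hsub => ?_) ht₀ 0).imp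
    fun γ hγ => hγ.2
  obtain ⟨C, hC⟩ := isCompact_Icc.exists_bound_of_continuousOn (hA.mono hsub)
  refine ⟨C.toNNReal, fun t ht => LipschitzWith.of_dist_le_mul fun x y => ?_⟩
  rw [dist_add_right, dist_eq_norm, dist_eq_norm, ← map_sub]
  exact (A t).le_of_opNorm_le ((hC t ht).trans (Real.le_coe_toNNReal C)) _

end Existence

theorem ContinuousOn.matrix_mulVec {X R m n : Type*} [TopologicalSpace X] [TopologicalSpace R]
    [NonUnitalNonAssocSemiring R] [ContinuousAdd R] [ContinuousMul R] [Fintype n]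
    {A : X → Matrix m n R} {x : X → n → R} {s : Set X}
    (hA : ContinuousOn A s) (hx : ContinuousOn x s) :
    ContinuousOn (fun t => (A t).mulVec (x t)) s :=
  continuousOn_iff_continuous_domRestrict.2 <|
    (continuousOn_iff_continuous_domRestrict.1 hA).matrix_mulVec
      (continuousOn_iff_continuous_domRestrict.1 hx)

theorem Set.OrdConnected.exists_isIntegralCurveOn_mulVec_add {𝕜 ι : Type*} [RCLike 𝕜]
    [Fintype ι] [DecidableEq ι] {I : Set ℝ} (hI : I.OrdConnected)
    {A : ℝ → Matrix ι ι 𝕜} {f : ℝ → ι → 𝕜} (hA : ContinuousOn A I) (hf : ContinuousOn f I) :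
    ∃ γ, IsIntegralCurveOn γ (fun t x => (A t).mulVec x + f t) I := by
  let Φ : Matrix ι ι 𝕜 ≃L[𝕜] (ι → 𝕜) →L[𝕜] ι → 𝕜 :=
    (Matrix.toLin'.trans LinearMap.toContinuousLinearMap).toContinuousLinearEquiv
  simpa [Φ] using hI.exists_isIntegralCurveOn_clm_apply_add (Φ.continuous.comp_continuousOn hA) hf

theorem UlamStableCn.of_forcing {n : ℕ} {N : (Fin n → ℂ) → ℝ} {I : Set ℝ}
    {A : ℝ → Matrix (Fin n) (Fin n) ℂ} {f g : ℝ → Fin n → ℂ} {K : ℝ}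
    (h : UlamStableCn n N I A f K) (hI : I.OrdConnected) (hA : ContinuousOn A I)
    (hf : ContinuousOn f I) (hg : ContinuousOn g I) : UlamStableCn n N I A g K := by
  obtain ⟨u, hu⟩ := hI.exists_isIntegralCurveOn_mulVec_add hA (hg.sub hf)
  have hu' : ContinuousOn (fun t => (A t).mulVec (u t) + (g t - f t)) I :=
    (hA.matrix_mulVec hu.continuousOn).add (hg.sub hf)
  refine ⟨h.1, fun ε hε φ φd hφ hφd hφε => ?_⟩
  obtain ⟨x, hx, hxφ⟩ := h.2 ε hε (φ - u) (fun t => φd t - ((A t).mulVec (u t) + (g t - f t)))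
    (fun t ht => (hφ t ht).sub (hu t ht)) (hφd.sub hu') fun t ht =>
      (congrArg N (by simp only [Pi.sub_apply, Matrix.mulVec_sub]; abel)).trans_le (hφε t ht)
  refine ⟨x + u, fun t ht => ((hx t ht).add (hu t ht)).congr_deriv ?_, fun t ht =>
    (congrArg N (by simp only [Pi.add_apply, Pi.sub_apply]; abel)).trans_le (hxφ t ht)⟩
  simp only [Pi.add_apply, Pi.sub_apply, Matrix.mulVec_add]
  abel

theorem statement0_general (n : ℕ) (N : (Fin n → ℂ) → ℝ)
    (I : Set ℝ) (hI : I.OrdConnected)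
    (A : ℝ → Matrix (Fin n) (Fin n) ℂ)
    (hA : ∀ i j, ContinuousOn (fun t => A t i j) I)
    (f : ℝ → Fin n → ℂ) (hf : ContinuousOn f I) (K : ℝ) :
    UlamStableCn n N I A f K ↔ UlamStableCn n N I A (fun _ => 0) K := by
  have hA' : ContinuousOn A I := continuousOn_pi.2 fun i => continuousOn_pi.2 (hA i)
  exact ⟨fun h => h.of_forcing hI hA' hf continuousOn_const,
    fun h => h.of_forcing hI hA' continuousOn_const hf⟩

theorem statement0 (n : ℕ) (N : (Fin n → ℂ) → ℝ) (hN : IsNormCn n N)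
    (I : Set ℝ) (hI : I.OrdConnected)
    (A : ℝ → Matrix (Fin n) (Fin n) ℂ)
    (hA : ∀ i j, ContinuousOn (fun t => A t i j) I)
    (f : ℝ → Fin n → ℂ) (hf : ContinuousOn f I) (K : ℝ) :
    UlamStableCn n N I A f K ↔ UlamStableCn n N I A (fun _ => 0) K :=
  statement0_general n N I hI A hA f hf K
end
end

section
/- Let −∞ ≤ a < b ≤ ∞ and let I be one of the intervals (a,b), (a,b], [a,b), [a,b]. Let λ₁, λ₂ : I → ℂ be continuous and let A(t) be the diagonal matrix with entries λ₁(t), λ₂(t). Suppose that κ₁₁(t) := ∫_t^b e^{−∫_t^s min{Re λ₁(τ), Re λ₂(τ)} dτ} ds exists (as a finite, possibly improper, integral) for all t ∈ I, and that K₁₁ := sup_{t∈I} κ₁₁(t) < ∞. Then the system x' = A(t)x is Ulam stable on I with Ulam constant K₁₁ (with respect to the maximum norm on ℂ²). Furthermore, if in addition lim_{t→b⁻} ∫_{t₀}^t min{Re λ₁(s), Re λ₂(s)} ds = ∞ for t₀ ∈ (a,b), then for every ε > 0 and every continuously differentiable φ : I → ℂ² with sup_{t∈I} ‖φ'(t)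 − A(t)φ(t)‖∞ ≤ ε, there exists a unique solution x of x' = A(t)x satisfying sup_{t∈I} ‖φ(t) − x(t)‖∞ ≤ K₁₁ε. -/
open MeasureTheory Filter Set

noncomputable section

/-- Ulam stability on `I` with constant `K` for the system `x' = A(t) x` on `ℂ²`,
with respect to the maximum norm (the sup norm on `Fin 2 → ℂ`). -/
def UlamStable2C (I : Set ℝ) (A : ℝ → Matrix (Fin 2) (Fin 2) ℂ) (K : ℝ) : Prop :=
  0 < K ∧
  ∀ ε : ℝ, 0 < ε →
    ∀ φ φd : ℝ → Fin 2 → ℂ,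
      (∀ t ∈ I, HasDerivWithinAt φ (φd t) I t) →
      ContinuousOn φd I →
      (∀ t ∈ I, ‖φd t - (A t).mulVec (φ t)‖ ≤ ε) →
      ∃ x : ℝ → Fin 2 → ℂ,
        (∀ t ∈ I, HasDerivWithinAt x ((A t).mulVec (x t)) I t) ∧
        ∀ t ∈ I, ‖φ t - x t‖ ≤ K * ε

/-- `κ₁₁(t) = ∫_t^b exp(-∫_t^s min (Re λ₁) (Re λ₂) dτ) ds`. -/
def kappa11 (b : EReal) (l1 l2 : ℝ → ℂ) (t : ℝ) : ℝ :=
  ∫ s in {s : ℝ | t < s ∧ (s : EReal) < b},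
    Real.exp (-∫ τ in t..s, min ((l1 τ).re) ((l2 τ).re))

/-!
Componentwise the system decouples: `φᵢ' = λᵢ φᵢ + δᵢ` with `‖δᵢ‖ ≤ ε`. With
`Λᵢ(t) = ∫_{t₀}^t λᵢ`, the function `e^{-Λᵢ} φᵢ` has derivative `e^{-Λᵢ} δᵢ`, which is integrable
up to `b`; hence `xᵢ(t) = φᵢ(t) + ∫_t^b e^{Λᵢ(t) - Λᵢ(s)} δᵢ(s) ds` is a solution, and since
`Re λᵢ ≥ min (Re λ₁) (Re λ₂)` it lies within `ε κ₁₁(t)` of `φᵢ(t)`. Every solution is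
`xᵢ = e^{Λᵢ} cᵢ`; two of them within bounded distance of `φ` differ by `e^{Λᵢ} (cᵢ - cᵢ')`, whose
modulus is at least `e^{∫_{t₀}^t min (Re λ₁) (Re λ₂)} ‖cᵢ - cᵢ'‖`, so `cᵢ = cᵢ'` once that integral
tends to `∞` at `b`.
-/

open Topology intervalIntegral Complex

section Calculus

variable {E : Type*} [NormedAddCommGroup E] [NormedSpace ℝ E] [CompleteSpace E]
  {I : Set ℝ} [hI : I.OrdConnected]

theorem hasDerivWithinAt_intervalIntegral_of_continuousOn {f : ℝ → E} (hf : ContinuousOn f I)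
    {a t : ℝ} (ha : a ∈ I) (ht : t ∈ I) :
    HasDerivWithinAt (fun u => ∫ x in a..u, f x) (f t) I t :=
  haveI : FTCFilter t (𝓝[I] t) (𝓝[I] t) :=
    { pure_le := pure_le_nhdsWithin ht
      le_nhds := inf_le_left
      meas_gen := hI.measurableSet.nhdsWithin_isMeasurablyGenerated t
      tendsto_Ixx := (tendstoIxxClass_of_subset (Ixx := Ioc) (Ixx' := Icc)
        fun _ _ => Ioc_subset_Icc_self).tendsto_Ixx }
  integral_hasDerivWithinAt_right (hf.mono (hI.uIcc_subset ha ht)).intervalIntegrable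
    (hf.stronglyMeasurableAtFilter_nhdsWithin hI.measurableSet t) (hf t ht)

theorem integral_eq_sub_of_hasDerivWithinAt_of_ordConnected {f f' : ℝ → E}
    (hf : ∀ x ∈ I, HasDerivWithinAt f (f' x) I x) (hf' : ContinuousOn f' I) {a b : ℝ}
    (ha : a ∈ I) (hb : b ∈ I) : ∫ y in a..b, f' y = f b - f a := by
  have hab : uIcc a b ⊆ I := hI.uIcc_subset ha hb
  refine integral_eq_sub_of_hasDeriv_right
    (fun x hx => (hf x (hab hx)).continuousWithinAt.mono hab) (fun x hx => ?_)
    (hf'.mono hab).intervalIntegrable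
  have hInhds : I ∈ 𝓝 x := mem_of_superset (Icc_mem_nhds hx.1 hx.2) hab
  exact ((hf x (mem_of_mem_nhds hInhds)).hasDerivAt hInhds).hasDerivWithinAt

end Calculus

section ScalarLinear

variable {l : ℝ → ℂ}

theorem integral_le_re_intervalIntegral {m : ℝ → ℝ} {t s : ℝ} (hts : t ≤ s)
    (hl : IntervalIntegrable l volume t s) (hm : IntervalIntegrable m volume t s)
    (hml : ∀ τ ∈ Icc t s, m τ ≤ (l τ).re) :
    ∫ τ in t..s, m τ ≤ (∫ τ in t..s, l τ).re := by
  rw [← RCLike.re_to_complex, ← intervalIntegral_re hl]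
  exact integral_mono_on hts hm ⟨hl.1.re, hl.2.re⟩ hml

theorem norm_exp_neg_intervalIntegral_le {m : ℝ → ℝ} {t s : ℝ} (hts : t ≤ s)
    (hl : IntervalIntegrable l volume t s) (hm : IntervalIntegrable m volume t s)
    (hml : ∀ τ ∈ Icc t s, m τ ≤ (l τ).re) :
    ‖exp (-∫ τ in t..s, l τ)‖ ≤ Real.exp (-∫ τ in t..s, m τ) := by
  rw [norm_exp, neg_re]
  exact Real.exp_le_exp.2 (neg_le_neg (integral_le_re_intervalIntegral hts hl hm hml))

theorem exp_intervalIntegral_mul_exp_neg {a b c : ℝ} (hab : IntervalIntegrable l volume a b)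
    (hac : IntervalIntegrable l volume a c) :
    exp (∫ τ in a..b, l τ) * exp (-∫ τ in a..c, l τ) = exp (-∫ τ in b..c, l τ) := by
  rw [← exp_add, ← integral_interval_sub_left hac hab, neg_sub, sub_eq_add_neg, add_comm]

variable {I : Set ℝ} [hI : I.OrdConnected] {t₀ : ℝ}

theorem hasDerivWithinAt_exp_neg_intervalIntegral_mul (hl : ContinuousOn l I) (ht₀ : t₀ ∈ I)
    {u : ℝ → ℂ} {u' : ℂ} {t : ℝ} (hu : HasDerivWithinAt u u' I t) (ht : t ∈ I) :
    HasDerivWithinAt (fun s => exp (-∫ τ in t₀..s, l τ) * u s)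
      (exp (-∫ τ in t₀..t, l τ) * (u' - l t * u t)) I t := by
  have hexp := (hasDerivWithinAt_intervalIntegral_of_continuousOn hl ht₀ ht).fun_neg.cexp
  exact (hexp.fun_mul hu).congr_deriv (by ring)

theorem eq_exp_intervalIntegral_mul_of_hasDerivWithinAt (hl : ContinuousOn l I) (ht₀ : t₀ ∈ I)
    {v : ℝ → ℂ} (hv : ∀ t ∈ I, HasDerivWithinAt v (l t * v t) I t) {t : ℝ} (ht : t ∈ I) :
    v t = exp (∫ τ in t₀..t, l τ) * v t₀ := by
  have hconst := integral_eq_sub_of_hasDerivWithinAt_of_ordConnected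
    (f := fun s => exp (-∫ τ in t₀..s, l τ) * v s) (f' := fun _ => 0)
    (fun x hx => by simpa using hasDerivWithinAt_exp_neg_intervalIntegral_mul hl ht₀ (hv x hx) hx)
    continuousOn_const ht₀ ht
  rw [intervalIntegral.integral_zero, integral_same, neg_zero, exp_zero, one_mul, eq_comm,
    sub_eq_zero] at hconst
  rw [← hconst, ← mul_assoc, ← exp_add, add_neg_cancel, exp_zero, one_mul]

end ScalarLinear

section Tail

variable (b : EReal)

theorem isOpen_tail (t : ℝ) : IsOpen {s : ℝ | t < s ∧ (s : EReal) < b} :=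
  isOpen_Ioi.inter (isOpen_Iio.preimage continuous_coe_real_ereal)

theorem tail_ae_eq_Ioc_union {t t' : ℝ} (htt' : t ≤ t') (ht'b : (t' : EReal) ≤ b) :
    {s : ℝ | t < s ∧ (s : EReal) < b} =ᵐ[volume]
      (Ioc t t' ∪ {s : ℝ | t' < s ∧ (s : EReal) < b} : Set ℝ) := by
  -- the two sides differ at most at `s = t' = b`
  refine ae_eq_set.2 ⟨?_, measure_mono_null (fun s hs => ?_) (measure_singleton t')⟩
  · refine measure_mono_null (fun s hs => ?_) measure_empty
    exact hs.2 ((le_or_gt s t').imp (fun h => ⟨hs.1.1, h⟩) fun h => ⟨h, hs.1.2⟩)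
  · obtain ⟨hs | hs, hsJ⟩ := hs
    · refine le_antisymm hs.2 (EReal.coe_le_coe_iff.1 (ht'b.trans (not_lt.1 fun hsb => ?_)))
      exact hsJ ⟨hs.1, hsb⟩
    · exact absurd ⟨htt'.trans_lt hs.1, hs.2⟩ hsJ

theorem setIntegral_tail_exp_pos {t : ℝ} (ht : (t : EReal) < b) {f : ℝ → ℝ}
    (hf : IntegrableOn (fun s => Real.exp (f s)) {s : ℝ | t < s ∧ (s : EReal) < b}) :
    0 < ∫ s in {s : ℝ | t < s ∧ (s : EReal) < b}, Real.exp (f s) := by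
  obtain ⟨x, htx, hxb⟩ := EReal.exists_between_coe_real ht
  have : NeZero (volume {s : ℝ | t < s ∧ (s : EReal) < b}) :=
    ⟨((isOpen_tail b t).measure_pos volume ⟨x, EReal.coe_lt_coe_iff.1 htx, hxb⟩).ne'⟩
  exact integral_exp_pos hf

variable {E : Type*} [NormedAddCommGroup E] [NormedSpace ℝ E] [CompleteSpace E]
  {I : Set ℝ} [I.OrdConnected]

theorem add_setIntegral_tail_eq {f f' : ℝ → E} (hf : ∀ x ∈ I, HasDerivWithinAt f (f' x) I x)
    (hf' : ContinuousOn f' I)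
    (hf'J : ∀ t ∈ I, IntegrableOn f' {s : ℝ | t < s ∧ (s : EReal) < b})
    (hIb : ∀ t ∈ I, (t : EReal) ≤ b) {t t' : ℝ} (ht : t ∈ I) (ht' : t' ∈ I) :
    f t + ∫ s in {s : ℝ | t < s ∧ (s : EReal) < b}, f' s =
      f t' + ∫ s in {s : ℝ | t' < s ∧ (s : EReal) < b}, f' s := by
  wlog htt' : t ≤ t' generalizing t t'
  · exact (this ht' ht (le_of_not_ge htt')).symm
  have hIoc : IntegrableOn f' (Ioc t t') :=
    ((hf'.mono (Set.Icc_subset I ht ht')).integrableOn_Icc).mono_set Ioc_subset_Icc_self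
  have hdisj : Disjoint (Ioc t t') {s : ℝ | t' < s ∧ (s : EReal) < b} :=
    Set.disjoint_left.2 fun s hs hs' => (not_lt.2 hs.2) hs'.1
  rw [setIntegral_congr_set (tail_ae_eq_Ioc_union b htt' (hIb t' ht')),
    setIntegral_union hdisj (isOpen_tail b t').measurableSet hIoc (hf'J t' ht'),
    ← integral_of_le htt', integral_eq_sub_of_hasDerivWithinAt_of_ordConnected hf hf' ht ht']
  abel

end Tail

section ScalarUlam

variable {I : Set ℝ} [hI : I.OrdConnected] {l : ℝ → ℂ} {m : ℝ → ℝ} {t₀ : ℝ}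

theorem norm_exp_mul_exp_neg_mul_le (hl : ContinuousOn l I) (hm : ContinuousOn m I)
    (hml : ∀ τ ∈ I, m τ ≤ (l τ).re) (ht₀ : t₀ ∈ I) {t s : ℝ} (ht : t ∈ I) (hs : s ∈ I)
    (hts : t ≤ s) {δ : ℂ} {ε : ℝ} (hδ : ‖δ‖ ≤ ε) :
    ‖exp (∫ τ in t₀..t, l τ) * (exp (-∫ τ in t₀..s, l τ) * δ)‖ ≤
      Real.exp (-∫ τ in t..s, m τ) * ε := by
  have hlI : ∀ {x y}, x ∈ I → y ∈ I → IntervalIntegrable l volume x y := fun hx hy =>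
    (hl.mono (hI.uIcc_subset hx hy)).intervalIntegrable
  rw [← mul_assoc, exp_intervalIntegral_mul_exp_neg (hlI ht₀ ht) (hlI ht₀ hs), norm_mul]
  exact mul_le_mul (norm_exp_neg_intervalIntegral_le hts (hlI ht hs)
    (hm.mono (hI.uIcc_subset ht hs)).intervalIntegrable
    fun τ hτ => hml τ (Set.Icc_subset I ht hs hτ)) hδ (norm_nonneg _) (Real.exp_pos _).le

theorem exists_norm_sub_exp_intervalIntegral_mul_le (b : EReal)
    (hIb : ∀ t ∈ I, (t : EReal) ≤ b) (hJ : ∀ t ∈ I, ∀ s : ℝ, t < s → (s : EReal) < b → s ∈ I)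
    (hl : ContinuousOn l I) (hm : ContinuousOn m I) (hml : ∀ τ ∈ I, m τ ≤ (l τ).re)
    (hker : ∀ t ∈ I, IntegrableOn (fun s => Real.exp (-∫ τ in t..s, m τ))
      {s : ℝ | t < s ∧ (s : EReal) < b})
    (ht₀ : t₀ ∈ I) {ε : ℝ} {u u' : ℝ → ℂ} (hu : ∀ t ∈ I, HasDerivWithinAt u (u' t) I t)
    (hu' : ContinuousOn u' I) (hε : ∀ t ∈ I, ‖u' t - l t * u t‖ ≤ ε) :
    ∃ c : ℂ, ∀ t ∈ I, ‖u t - exp (∫ τ in t₀..t, l τ) * c‖ ≤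
      (∫ s in {s : ℝ | t < s ∧ (s : EReal) < b}, Real.exp (-∫ τ in t..s, m τ)) * ε := by
  set L : ℝ → ℂ := fun t => ∫ τ in t₀..t, l τ
  set g : ℝ → ℂ := fun s => exp (-L s) * (u' s - l s * u s)
  have hLc : ContinuousOn L I := fun t ht =>
    (hasDerivWithinAt_intervalIntegral_of_continuousOn hl ht₀ ht).continuousWithinAt
  have huc : ContinuousOn u I := fun t ht => (hu t ht).continuousWithinAt
  have hg : ContinuousOn g I :=
    (continuous_exp.comp_continuousOn hLc.neg).mul (hu'.sub (hl.mul huc))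
  have hJm : ∀ t, MeasurableSet {s : ℝ | t < s ∧ (s : EReal) < b} := fun t =>
    (isOpen_tail b t).measurableSet
  have hbound : ∀ t ∈ I, ∀ s ∈ {s : ℝ | t < s ∧ (s : EReal) < b},
      ‖exp (L t) * g s‖ ≤ Real.exp (-∫ τ in t..s, m τ) * ε := fun t ht s hs =>
    have hsI := hJ t ht s hs.1 hs.2
    norm_exp_mul_exp_neg_mul_le hl hm hml ht₀ ht hsI hs.1.le (hε s hsI)
  have hgJ' : ∀ t ∈ I, IntegrableOn (fun s => exp (L t) * g s) {s : ℝ | t < s ∧ (s : EReal) < b} :=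
    fun t ht => ((hker t ht).mul_const ε).mono'
      (((continuousOn_const.mul hg).mono fun s hs => hJ t ht s hs.1 hs.2).aestronglyMeasurable
        (hJm t)) (ae_restrict_of_forall_mem (hJm t) (hbound t ht))
  have hgJ : ∀ t ∈ I, IntegrableOn g {s : ℝ | t < s ∧ (s : EReal) < b} := fun t ht => by
    have := (hgJ' t ht).const_mul (exp (-L t))
    simp only [← mul_assoc, ← exp_add, neg_add_cancel, exp_zero, one_mul] at this
    exact this
  -- `e^{-L} u + ∫_t^b (e^{-L} u)'` is constant on `I`; `c` is its value
  refine ⟨exp (-L t₀) * u t₀ + ∫ s in {s : ℝ | t₀ < s ∧ (s : EReal) < b}, g s, fun t ht => ?_⟩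
  rw [← add_setIntegral_tail_eq b (fun x hx => hasDerivWithinAt_exp_neg_intervalIntegral_mul hl ht₀
    (hu x hx) hx) hg hgJ hIb ht ht₀]
  have hsplit : u t - exp (L t) * (exp (-L t) * u t + ∫ s in {s : ℝ | t < s ∧ (s : EReal) < b}, g s)
      = -∫ s in {s : ℝ | t < s ∧ (s : EReal) < b}, exp (L t) * g s := by
    rw [MeasureTheory.integral_const_mul, mul_add, ← mul_assoc, ← exp_add, add_neg_cancel, exp_zero,
      one_mul]
    ring
  rw [hsplit, norm_neg, ← MeasureTheory.integral_mul_const]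
  exact norm_integral_le_of_norm_le ((hker t ht).mul_const ε)
    (ae_restrict_of_forall_mem (hJm t) (hbound t ht))

end ScalarUlam

theorem eq_zero_of_tendsto_re_of_norm_exp_mul_le {α : Type*} {F : Filter α} [F.NeBot]
    {L : α → ℂ} {d : ℂ} {C : ℝ} (hL : Tendsto (fun t => (L t).re) F atTop)
    (hC : ∀ᶠ t in F, ‖exp (L t) * d‖ ≤ C) : d = 0 := by
  by_contra hd
  have hgrow : Tendsto (fun t => ‖exp (L t) * d‖) F atTop := by
    simp only [norm_mul, norm_exp]
    exact (Real.tendsto_exp_atTop.comp hL).atTop_mul_const (norm_pos_iff.2 hd)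
  obtain ⟨t, htC, htC'⟩ := (hC.and (hgrow.eventually_gt_atTop C)).exists
  exact htC'.not_ge htC

section Diagonal

variable {ι : Type*} [Fintype ι] {I : Set ℝ} [hI : I.OrdConnected]
  {l : ι → ℝ → ℂ} {m : ℝ → ℝ} {t₀ : ℝ}

def diagonalSolution (l : ι → ℝ → ℂ) (t₀ : ℝ) (c : ι → ℂ) (t : ℝ) : ι → ℂ :=
  fun i => exp (∫ τ in t₀..t, l i τ) * c i

theorem hasDerivWithinAt_diagonalSolution [DecidableEq ι] (hl : ∀ i, ContinuousOn (l i) I)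
    (ht₀ : t₀ ∈ I) (c : ι → ℂ) {t : ℝ} (ht : t ∈ I) :
    HasDerivWithinAt (diagonalSolution l t₀ c)
      ((Matrix.diagonal fun i => l i t).mulVec (diagonalSolution l t₀ c t)) I t := by
  refine hasDerivWithinAt_pi.2 fun i => ?_
  rw [Matrix.mulVec_diagonal]
  exact ((hasDerivWithinAt_intervalIntegral_of_continuousOn (hl i) ht₀ ht).cexp.mul_const
    (c i)).congr_deriv (by simp only [diagonalSolution]; ring)

theorem eqOn_diagonalSolution [DecidableEq ι] (hl : ∀ i, ContinuousOn (l i) I) (ht₀ : t₀ ∈ I)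
    {y : ℝ → ι → ℂ}
    (hy : ∀ t ∈ I, HasDerivWithinAt y ((Matrix.diagonal fun i => l i t).mulVec (y t)) I t) :
    EqOn y (diagonalSolution l t₀ (y t₀)) I := fun t ht => funext fun i =>
  eq_exp_intervalIntegral_mul_of_hasDerivWithinAt (hl i) ht₀
    (fun s hs => by simpa [Matrix.mulVec_diagonal] using hasDerivWithinAt_pi.1 (hy s hs) i) ht

theorem exists_norm_sub_diagonalSolution_le [DecidableEq ι] (b : EReal)
    (hIb : ∀ t ∈ I, (t : EReal) ≤ b) (hJ : ∀ t ∈ I, ∀ s : ℝ, t < s → (s : EReal) < b → s ∈ I)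
    (hl : ∀ i, ContinuousOn (l i) I) (hm : ContinuousOn m I)
    (hml : ∀ i, ∀ τ ∈ I, m τ ≤ (l i τ).re)
    (hker : ∀ t ∈ I, IntegrableOn (fun s => Real.exp (-∫ τ in t..s, m τ))
      {s : ℝ | t < s ∧ (s : EReal) < b})
    (ht₀ : t₀ ∈ I) {ε : ℝ} (hε : 0 ≤ ε) {φ φ' : ℝ → ι → ℂ}
    (hφ : ∀ t ∈ I, HasDerivWithinAt φ (φ' t) I t) (hφ' : ContinuousOn φ' I)
    (hφε : ∀ t ∈ I, ‖φ' t - (Matrix.diagonal fun i => l i t).mulVec (φ t)‖ ≤ ε) :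
    ∃ c : ι → ℂ, ∀ t ∈ I, ‖φ t - diagonalSolution l t₀ c t‖ ≤
      (∫ s in {s : ℝ | t < s ∧ (s : EReal) < b}, Real.exp (-∫ τ in t..s, m τ)) * ε := by
  choose c hc using fun i => exists_norm_sub_exp_intervalIntegral_mul_le b hIb hJ (hl i) hm
    (hml i) hker ht₀ (fun t ht => hasDerivWithinAt_pi.1 (hφ t ht) i)
    ((continuous_apply i).comp_continuousOn hφ') fun t ht => by
      simpa [Matrix.mulVec_diagonal] using (norm_le_pi_norm _ i).trans (hφε t ht)
  refine ⟨c, fun t ht => (pi_norm_le_iff_of_nonneg ?_).2 fun i => hc i t ht⟩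
  exact mul_nonneg (setIntegral_nonneg (isOpen_tail b t).measurableSet
    fun s _ => (Real.exp_pos _).le) hε

theorem eq_of_norm_diagonalSolution_sub_le {F : Filter ℝ} [F.NeBot]
    (hl : ∀ i, ContinuousOn (l i) I) (hm : ContinuousOn m I)
    (hml : ∀ i, ∀ τ ∈ I, m τ ≤ (l i τ).re) (ht₀ : t₀ ∈ I) (hF : ∀ᶠ t in F, t ∈ I ∧ t₀ ≤ t)
    (hmF : Tendsto (fun t => ∫ τ in t₀..t, m τ) F atTop) {c c' : ι → ℂ} {C : ℝ}
    (hC : ∀ t ∈ I, ‖diagonalSolution l t₀ c t - diagonalSolution l t₀ c' t‖ ≤ C) : c = c' := by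
  funext i
  rw [← sub_eq_zero]
  refine eq_zero_of_tendsto_re_of_norm_exp_mul_le (L := fun t => ∫ τ in t₀..t, l i τ) (C := C)
    (tendsto_atTop_mono' F ?_ hmF) ?_
  · filter_upwards [hF] with t ⟨ht, ht₀t⟩
    exact integral_le_re_intervalIntegral ht₀t
      ((hl i).mono (hI.uIcc_subset ht₀ ht)).intervalIntegrable
      (hm.mono (hI.uIcc_subset ht₀ ht)).intervalIntegrable
      fun τ hτ => hml i τ (Set.Icc_subset I ht₀ ht hτ)
  · filter_upwards [hF] with t ⟨ht, _⟩
    simpa [diagonalSolution, mul_sub] using (norm_le_pi_norm _ i).trans (hC t ht)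

theorem eqOn_of_norm_sub_le [DecidableEq ι] {F : Filter ℝ} [F.NeBot]
    (hl : ∀ i, ContinuousOn (l i) I) (hm : ContinuousOn m I)
    (hml : ∀ i, ∀ τ ∈ I, m τ ≤ (l i τ).re) (ht₀ : t₀ ∈ I) (hF : ∀ᶠ t in F, t ∈ I ∧ t₀ ≤ t)
    (hmF : Tendsto (fun t => ∫ τ in t₀..t, m τ) F atTop) {φ x y : ℝ → ι → ℂ} {C : ℝ}
    (hx : ∀ t ∈ I, HasDerivWithinAt x ((Matrix.diagonal fun i => l i t).mulVec (x t)) I t)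
    (hy : ∀ t ∈ I, HasDerivWithinAt y ((Matrix.diagonal fun i => l i t).mulVec (y t)) I t)
    (hφx : ∀ t ∈ I, ‖φ t - x t‖ ≤ C) (hφy : ∀ t ∈ I, ‖φ t - y t‖ ≤ C) : EqOn y x I := by
  have hxc := eqOn_diagonalSolution hl ht₀ hx
  have hyc := eqOn_diagonalSolution hl ht₀ hy
  have hyx : y t₀ = x t₀ := by
    refine eq_of_norm_diagonalSolution_sub_le hl hm hml ht₀ hF hmF (C := C + C) fun t ht => ?_
    rw [← hxc ht, ← hyc ht]
    refine (norm_sub_le_norm_sub_add_norm_sub _ (φ t) _).trans ?_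
    rw [norm_sub_rev]
    exact add_le_add (hφy t ht) (hφx t ht)
  intro t ht
  rw [hyc ht, hxc ht, hyx]

end Diagonal

theorem ordConnected_of_Ioo_subset_of_subset_Icc {a b : EReal} {I : Set ℝ}
    (hI1 : ∀ x : ℝ, a < (x : EReal) → (x : EReal) < b → x ∈ I)
    (hI2 : ∀ x ∈ I, a ≤ (x : EReal) ∧ (x : EReal) ≤ b) : I.OrdConnected := by
  refine ⟨fun x hx y hy z hz => ?_⟩
  rcases hz.1.eq_or_lt with rfl | hxz
  · exact hx
  rcases hz.2.eq_or_lt with rfl | hzy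
  · exact hy
  exact hI1 z ((hI2 x hx).1.trans_lt (EReal.coe_lt_coe_iff.2 hxz))
    ((EReal.coe_lt_coe_iff.2 hzy).trans_le (hI2 y hy).2)

theorem comap_coe_nhdsLT_neBot {b : EReal} {t₀ : ℝ} (ht₀ : (t₀ : EReal) < b) :
    (comap (fun x : ℝ => (x : EReal)) (𝓝[<] b)).NeBot := by
  refine comap_neBot fun U hU => ?_
  obtain ⟨c, hcb, hcU⟩ := (nhdsLT_basis_of_exists_lt ⟨_, ht₀⟩).mem_iff.1 hU
  obtain ⟨x, hcx, hxb⟩ := EReal.exists_between_coe_real hcb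
  exact ⟨x, hcU ⟨hcx, hxb⟩⟩

theorem statement3 (a b : EReal) (hab : a < b) (I : Set ℝ)
    (hI1 : ∀ x : ℝ, a < (x : EReal) → (x : EReal) < b → x ∈ I)
    (hI2 : ∀ x ∈ I, a ≤ (x : EReal) ∧ (x : EReal) ≤ b)
    (l1 l2 : ℝ → ℂ) (hl1 : ContinuousOn l1 I) (hl2 : ContinuousOn l2 I)
    (hker : ∀ t ∈ I, IntegrableOn
      (fun s => Real.exp (-∫ τ in t..s, min ((l1 τ).re) ((l2 τ).re)))
      {s : ℝ | t < s ∧ (s : EReal) < b})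
    (hbdd : BddAbove (kappa11 b l1 l2 '' I)) :
    UlamStable2C I (fun t => !![l1 t, 0; 0, l2 t]) (sSup (kappa11 b l1 l2 '' I)) ∧
    ((∀ t₀ : ℝ, a < (t₀ : EReal) → (t₀ : EReal) < b →
        Tendsto (fun t => ∫ s in t₀..t, min ((l1 s).re) ((l2 s).re))
          (Filter.comap (fun x : ℝ => (x : EReal)) (nhdsWithin b (Iio b))) atTop) →
      ∀ ε : ℝ, 0 < ε → ∀ φ φd : ℝ → Fin 2 → ℂ,
        (∀ t ∈ I, HasDerivWithinAt φ (φd t) I t) →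
        ContinuousOn φd I →
        (∀ t ∈ I, ‖φd t - (!![l1 t, 0; 0, l2 t]).mulVec (φ t)‖ ≤ ε) →
        ∃ x : ℝ → Fin 2 → ℂ,
          ((∀ t ∈ I, HasDerivWithinAt x ((!![l1 t, 0; 0, l2 t]).mulVec (x t)) I t) ∧
            ∀ t ∈ I, ‖φ t - x t‖ ≤ sSup (kappa11 b l1 l2 '' I) * ε) ∧
          ∀ y : ℝ → Fin 2 → ℂ,
            ((∀ t ∈ I, HasDerivWithinAt y ((!![l1 t, 0; 0, l2 t]).mulVec (y t)) I t) ∧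
              ∀ t ∈ I, ‖φ t - y t‖ ≤ sSup (kappa11 b l1 l2 '' I) * ε) →
            EqOn y x I) := by
  obtain ⟨t₀, hat₀, ht₀b⟩ := EReal.exists_between_coe_real hab
  have ht₀ : t₀ ∈ I := hI1 t₀ hat₀ ht₀b
  have := ordConnected_of_Ioo_subset_of_subset_Icc hI1 hI2
  have hJ : ∀ t ∈ I, ∀ s : ℝ, t < s → (s : EReal) < b → s ∈ I := fun t ht s hts hsb =>
    hI1 s ((hI2 t ht).1.trans_lt (EReal.coe_lt_coe_iff.2 hts)) hsb
  set l : Fin 2 → ℝ → ℂ := ![l1, l2]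
  have hA : ∀ t, !![l1 t, 0; 0, l2 t] = Matrix.diagonal fun i => l i t := fun t => by
    rw [Matrix.diagonal_fin_two]; rfl
  have hl : ∀ i, ContinuousOn (l i) I := Fin.forall_fin_two.2 ⟨hl1, hl2⟩
  have hm : ContinuousOn (fun τ => min (l1 τ).re (l2 τ).re) I :=
    (continuous_re.comp_continuousOn hl1).inf (continuous_re.comp_continuousOn hl2)
  have hml : ∀ i, ∀ τ ∈ I, min (l1 τ).re (l2 τ).re ≤ (l i τ).re :=
    Fin.forall_fin_two.2 ⟨fun _ _ => min_le_left _ _, fun _ _ => min_le_right _ _⟩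
  set K := sSup (kappa11 b l1 l2 '' I)
  have hK : ∀ t ∈ I, kappa11 b l1 l2 t ≤ K := fun t ht => le_csSup hbdd (mem_image_of_mem _ ht)
  simp only [hA]
  have hUlam : UlamStable2C I (fun t => Matrix.diagonal fun i => l i t) K := by
    refine ⟨(setIntegral_tail_exp_pos b ht₀b (hker t₀ ht₀)).trans_le (hK t₀ ht₀),
      fun ε hε φ φd hφ hφd hφε => ?_⟩
    obtain ⟨c, hc⟩ := exists_norm_sub_diagonalSolution_le b (fun t ht => (hI2 t ht).2) hJ hl hm
      hml hker ht₀ hε.le hφ hφd hφε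
    exact ⟨_, fun t ht => hasDerivWithinAt_diagonalSolution hl ht₀ c ht,
      fun t ht => (hc t ht).trans (mul_le_mul_of_nonneg_right (hK t ht) hε.le)⟩
  refine ⟨hUlam, fun hmF ε hε φ φd hφ hφd hφε => ?_⟩
  obtain ⟨x, hx, hφx⟩ := hUlam.2 ε hε φ φd hφ hφd hφε
  refine ⟨x, ⟨hx, hφx⟩, fun y ⟨hy, hφy⟩ => ?_⟩
  have := comap_coe_nhdsLT_neBot ht₀b
  refine eqOn_of_norm_sub_le hl hm hml ht₀ ?_ (hmF t₀ hat₀ ht₀b) hx hy hφx hφy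
  filter_upwards [preimage_mem_comap (Ioo_mem_nhdsLT ht₀b)] with t ht
  exact ⟨hJ t₀ ht₀ t (EReal.coe_lt_coe_iff.1 ht.1) ht.2, (EReal.coe_lt_coe_iff.1 ht.1).le⟩
end
end

section
/- Let −∞ ≤ a < b ≤ ∞ and let I be one of the intervals (a,b), (a,b], [a,b), [a,b]. Let λ₁, λ₂ : I → ℂ be continuous and let A(t) be the diagonal matrix with entries λ₁(t), λ₂(t). Suppose that κ₁₃(t) := max{ ∫_t^b e^{−∫_t^s Re λ₁(τ) dτ} ds, ∫_a^t e^{∫_s^t Re λ₂(τ) dτ} ds } exists (both integrals finite, possibly improper) for all t ∈ I, and that K₁₃ := sup_{t∈I} κ₁₃(t) < ∞. Then the system x' = A(t)x is Ulam stable on I with Ulam constant K₁₃ (with respect to the maximum norm on ℂ²). Furthermore, if in addition lim_{t→b⁻} ∫_{t₀}^t Re λ₁(s) ds = ∞ and lim_{t→a⁺} ∫_{t₀}^t Re λ₂(s) ds = ∞ for t₀ ∈ (a,b), then for every ε > 0 and every continuously differentiable φ : I → ℂ² with sup_{t∈I} ‖φ'(t) − A(t)φ(t)‖∞ ≤ ε,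 there exists a unique solution x of x' = A(t)x satisfying sup_{t∈I} ‖φ(t) − x(t)‖∞ ≤ K₁₃ε. -/
open MeasureTheory Filter Set

noncomputable section

/-- `κ₁₃(t)`. -/
def kappa13 (a b : EReal) (l1 l2 : ℝ → ℂ) (t : ℝ) : ℝ :=
  max (∫ s in {s : ℝ | t < s ∧ (s : EReal) < b}, Real.exp (-∫ τ in t..s, (l1 τ).re))
    (∫ s in {s : ℝ | a < (s : EReal) ∧ s < t}, Real.exp (∫ τ in s..t, (l2 τ).re))

/-!
The matrix is diagonal and the norm is the maximum norm, so the system splits into the scalar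
equations `x' = λ₁ x` and `x' = λ₂ x`, which can be treated one at a time. For `x' = λ x` with
residual `q = φ' - λ φ`, `‖q‖ ≤ ε`, variation of constants gives the solution
`x t = φ t + ∫ s in (t, b), exp (-∫ τ in t..s, λ τ) * q s`, whose distance to `φ` is at most
`ε * ∫ s in (t, b), exp (-∫ τ in t..s, Re λ τ)`. The kernel over `(a, t)` used for the second
component is the same construction after the reflection `t ↦ -t`.

Every solution is `c * exp (∫ τ in t₀..t, λ τ)`, so the difference of two solutions that both
stay within `K ε` of `φ` is bounded; when `∫ Re λ` tends to `∞` at an endpoint this forces `c = 0`.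
-/

open Topology

theorem exists_mem_le_Ici_mem_nhdsWithin {α : Type*} [TopologicalSpace α] [LinearOrder α]
    [OrderTopology α] {I : Set α} {t : α} (ht : t ∈ I) : ∃ c ∈ I, c ≤ t ∧ Ici c ∈ 𝓝[I] t := by
  by_cases h : ∃ c ∈ I, c < t
  · obtain ⟨c, hc, hct⟩ := h
    exact ⟨c, hc, hct.le, mem_nhdsWithin_of_mem_nhds (Ici_mem_nhds hct)⟩
  · push Not at h
    exact ⟨t, ht, le_rfl, mem_of_superset self_mem_nhdsWithin h⟩

theorem exists_mem_ge_Iic_mem_nhdsWithin {α : Type*} [TopologicalSpace α] [LinearOrder α]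
    [OrderTopology α] {I : Set α} {t : α} (ht : t ∈ I) : ∃ d ∈ I, t ≤ d ∧ Iic d ∈ 𝓝[I] t :=
  exists_mem_le_Ici_mem_nhdsWithin (α := αᵒᵈ) ht

theorem Set.OrdConnected.hasDerivWithinAt_integral {E : Type*} [NormedAddCommGroup E]
    [NormedSpace ℝ E] [CompleteSpace E] {I : Set ℝ} (hI : I.OrdConnected) {f : ℝ → E}
    (hf : ContinuousOn f I) {a t : ℝ} (ha : a ∈ I) (ht : t ∈ I) :
    HasDerivWithinAt (fun u => ∫ x in a..u, f x) (f t) I t := by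
  obtain ⟨c, hc, hct, hcI⟩ := exists_mem_le_Ici_mem_nhdsWithin ht
  obtain ⟨d, hd, htd, hdI⟩ := exists_mem_ge_Iic_mem_nhdsWithin ht
  have : Fact (t ∈ Icc c d) := ⟨⟨hct, htd⟩⟩
  have hcd : Icc c d ⊆ I := hI.out hc hd
  refine (intervalIntegral.integral_hasDerivWithinAt_right (s := Icc c d)
    (hf.mono (hI.uIcc_subset ha ht)).intervalIntegrable
    ((hf.mono hcd).stronglyMeasurableAtFilter_nhdsWithin measurableSet_Icc t)
    ((hf t ht).mono hcd)).mono_of_mem_nhdsWithin ?_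
  rw [← Ici_inter_Iic]
  exact inter_mem hcI hdI

theorem re_intervalIntegral {l : ℝ → ℂ} {a b : ℝ} (hl : IntervalIntegrable l volume a b) :
    (∫ x in a..b, l x).re = ∫ x in a..b, (l x).re :=
  (intervalIntegral.intervalIntegral_re hl).symm

theorem HasDerivWithinAt.comp_neg {E : Type*} [NormedAddCommGroup E] [NormedSpace ℝ E]
    {f : ℝ → E} {f' : E} {s : Set ℝ} {t : ℝ} (hf : HasDerivWithinAt f f' s (-t)) :
    HasDerivWithinAt (fun u => f (-u)) (-f') (-s) t := by
  have h := hf.scomp t (hasDerivAt_neg t).hasDerivWithinAt (s := -s) fun _ hu => hu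
  rwa [neg_one_smul] at h

theorem Set.OrdConnected.neg {I : Set ℝ} (hI : I.OrdConnected) : (-I).OrdConnected :=
  convex_iff_ordConnected.1 (convex_iff_ordConnected.2 hI).neg

theorem intervalIntegral_restrict_eq_of_Ioo_subset {E : Type*} [NormedAddCommGroup E]
    [NormedSpace ℝ E] {J : Set ℝ} {f : ℝ → E} {a b : ℝ} (hJ : Ioo (min a b) (max a b) ⊆ J) :
    ∫ x in a..b, f x ∂(volume.restrict J) = ∫ x in a..b, f x := by
  rw [intervalIntegral.intervalIntegral_eq_integral_uIoc,
    intervalIntegral.intervalIntegral_eq_integral_uIoc,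
    Measure.restrict_restrict measurableSet_uIoc]
  congr 2
  exact Measure.restrict_congr_set (inter_subset_left.eventuallyLE.antisymm
    (Ioo_ae_eq_Ioc.symm.le.trans (subset_inter Ioo_subset_Ioc_self hJ).eventuallyLE))

theorem hasDerivWithinAt_setIntegral_Ioi_inter {E : Type*} [NormedAddCommGroup E]
    [NormedSpace ℝ E] [CompleteSpace E] {I J : Set ℝ} (hI : I.OrdConnected)
    (hIJ : ∀ t ∈ I, Iio t ⊆ J) {g : ℝ → E} (hg : ContinuousOn g I)
    (hgi : ∀ t ∈ I, IntegrableOn g (Ioi t ∩ J)) {t : ℝ} (ht : t ∈ I) :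
    HasDerivWithinAt (fun u => ∫ s in Ioi u ∩ J, g s) (-g t) I t := by
  -- tails are integrated against `volume.restrict J`, which is `volume` between points of `I`
  have hrestrict : ∀ u, (volume.restrict J).restrict (Ioi u) = volume.restrict (Ioi u ∩ J) :=
    fun u => Measure.restrict_restrict measurableSet_Ioi
  have htail : ∀ u ∈ I, ∫ s in Ioi u ∩ J, g s = (∫ s in Ioi t ∩ J, g s) - ∫ s in t..u, g s := by
    intro u hu
    have h := intervalIntegral.integral_Ioi_sub_Ioi' (μ := volume.restrict J) (f := g)
      (by rw [IntegrableOn, hrestrict]; exact hgi t ht)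
      (by rw [IntegrableOn, hrestrict]; exact hgi u hu)
    rw [hrestrict, hrestrict, intervalIntegral_restrict_eq_of_Ioo_subset
      (Ioo_subset_Iio_self.trans (hIJ _ (max_rec' (· ∈ I) ht hu)))] at h
    rw [← h, sub_sub_cancel]
  refine (((hasDerivWithinAt_const t I _).sub (hI.hasDerivWithinAt_integral hg ht ht)).congr
    htail (htail t ht)).congr_deriv (zero_sub _)

section ScalarEquation

variable {I : Set ℝ} {l : ℝ → ℂ}

theorem eq_mul_cexp_integral (hI : I.OrdConnected) (hl : ContinuousOn l I) {z : ℝ → ℂ}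
    (hz : ∀ t ∈ I, HasDerivWithinAt z (l t * z t) I t) {t₀ t : ℝ} (ht₀ : t₀ ∈ I) (ht : t ∈ I) :
    z t = z t₀ * Complex.exp (∫ s in t₀..t, l s) := by
  set Λ := fun u => ∫ s in t₀..u, l s
  have hderiv : ∀ u ∈ I, HasDerivWithinAt (fun u => z u * Complex.exp (-Λ u)) 0 I u :=
    fun u hu => ((hz u hu).mul (hI.hasDerivWithinAt_integral hl ht₀ hu).neg.cexp).congr_deriv
      (by ring)
  have hconst := (convex_iff_ordConnected.2 hI).norm_image_sub_le_of_norm_hasDerivWithin_le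
    hderiv (C := 0) (fun _ _ => norm_zero.le) ht₀ ht
  rw [zero_mul, norm_le_zero_iff, sub_eq_zero] at hconst
  have hΛ₀ : Λ t₀ = 0 := intervalIntegral.integral_same
  calc z t = z t * Complex.exp (-Λ t) * Complex.exp (Λ t) := by
        rw [mul_assoc, ← Complex.exp_add, neg_add_cancel, Complex.exp_zero, mul_one]
    _ = z t₀ * Complex.exp (Λ t) := by
        rw [hconst, hΛ₀, neg_zero, Complex.exp_zero, mul_one]

theorem eqOn_zero_of_tendsto_integral_re (hI : I.OrdConnected) (hl : ContinuousOn l I)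
    {z : ℝ → ℂ} (hz : ∀ t ∈ I, HasDerivWithinAt z (l t * z t) I t) {C : ℝ}
    (hC : ∀ t ∈ I, ‖z t‖ ≤ C) {F : Filter ℝ} [F.NeBot] (hFI : ∀ᶠ t in F, t ∈ I) {t₀ : ℝ}
    (ht₀ : t₀ ∈ I) (hF : Tendsto (fun t => ∫ s in t₀..t, (l s).re) F atTop) : EqOn z 0 I := by
  suffices hz₀ : z t₀ = 0 by
    intro t ht
    rw [eq_mul_cexp_integral hI hl hz ht₀ ht, hz₀, zero_mul, Pi.zero_apply]
  by_contra hz₀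
  have hgrow : Tendsto (fun t => ‖z t₀‖ * Real.exp (∫ s in t₀..t, (l s).re)) F atTop :=
    (Real.tendsto_exp_atTop.comp hF).const_mul_atTop (norm_pos_iff.2 hz₀)
  obtain ⟨t, ht, hCt⟩ := (hFI.and (hgrow.eventually_gt_atTop C)).exists
  refine (hC t ht).not_gt ?_
  rwa [eq_mul_cexp_integral hI hl hz ht₀ ht, norm_mul, Complex.norm_exp,
    re_intervalIntegral ((hl.mono (hI.uIcc_subset ht₀ ht)).intervalIntegrable)]

theorem cexp_integral_mul_cexp_neg_integral (hI : I.OrdConnected) (hl : ContinuousOn l I)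
    {t₀ t s : ℝ} (ht₀ : t₀ ∈ I) (ht : t ∈ I) (hs : s ∈ I) :
    Complex.exp (∫ τ in t₀..t, l τ) * Complex.exp (-∫ τ in t₀..s, l τ) =
      Complex.exp (-∫ τ in t..s, l τ) := by
  rw [← Complex.exp_add, ← intervalIntegral.integral_interval_sub_left
    (hl.mono (hI.uIcc_subset ht₀ hs)).intervalIntegrable
    (hl.mono (hI.uIcc_subset ht₀ ht)).intervalIntegrable]
  ring_nf

theorem exists_solution_near_of_integrableOn_Ioi_inter (hI : I.OrdConnected) {J : Set ℝ}
    (hJ : MeasurableSet J) (hJI : ∀ t ∈ I, Ioi t ∩ J ⊆ I) (hIJ : ∀ t ∈ I, Iio t ⊆ J)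
    (hl : ContinuousOn l I)
    (hker : ∀ t ∈ I, IntegrableOn (fun s => Real.exp (-∫ τ in t..s, (l τ).re)) (Ioi t ∩ J))
    {q φ : ℝ → ℂ} {ε : ℝ} (hq : ContinuousOn q I) (hqε : ∀ t ∈ I, ‖q t‖ ≤ ε)
    (hφ : ∀ t ∈ I, HasDerivWithinAt φ (l t * φ t + q t) I t) :
    ∃ x : ℝ → ℂ, (∀ t ∈ I, HasDerivWithinAt x (l t * x t) I t) ∧
      ∀ t ∈ I, ‖φ t - x t‖ ≤ ε * ∫ s in Ioi t ∩ J, Real.exp (-∫ τ in t..s, (l τ).re) := by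
  rcases I.eq_empty_or_nonempty with rfl | ⟨t₀, ht₀⟩
  · exact ⟨φ, by simp, by simp⟩
  set Λ : ℝ → ℂ := fun u => ∫ τ in t₀..u, l τ
  have hΛ : ∀ t ∈ I, HasDerivWithinAt Λ (l t) I t :=
    fun t ht => hI.hasDerivWithinAt_integral hl ht₀ ht
  set g : ℝ → ℂ := fun s => Complex.exp (-Λ s) * q s
  have hg : ContinuousOn g I :=
    (HasDerivWithinAt.continuousOn hΛ).neg.cexp.mul hq
  have hkernel : ∀ t ∈ I, ∀ s ∈ Ioi t ∩ J,
      ‖Complex.exp (Λ t) * g s‖ ≤ ε * Real.exp (-∫ τ in t..s, (l τ).re) := by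
    intro t ht s hs
    have hsI := hJI t ht hs
    rw [← mul_assoc, cexp_integral_mul_cexp_neg_integral hI hl ht₀ ht hsI, norm_mul,
      Complex.norm_exp, Complex.neg_re,
      re_intervalIntegral (hl.mono (hI.uIcc_subset ht hsI)).intervalIntegrable, mul_comm]
    gcongr
    exact hqε s hsI
  have hgi : ∀ t ∈ I, IntegrableOn g (Ioi t ∩ J) := fun t ht =>
    have hmeas := (measurableSet_Ioi (a := t)).inter hJ
    (integrable_const_mul_iff (Complex.exp_ne_zero (Λ t)).isUnit g).1 <|
      ((hker t ht).const_mul ε).mono'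
        (((hg.mono (hJI t ht)).aestronglyMeasurable hmeas).const_mul _)
        ((ae_restrict_iff' hmeas).2 (Eventually.of_forall (hkernel t ht)))
  refine ⟨fun t => φ t + Complex.exp (Λ t) * ∫ s in Ioi t ∩ J, g s, fun t ht => ?_,
    fun t ht => ?_⟩
  · have hcancel : Complex.exp (Λ t) * g t = q t := by
      rw [← mul_assoc, ← Complex.exp_add, add_neg_cancel, Complex.exp_zero, one_mul]
    refine ((hφ t ht).add ((hΛ t ht).cexp.mul
      (hasDerivWithinAt_setIntegral_Ioi_inter hI hIJ hg hgi ht))).congr_deriv ?_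
    linear_combination -hcancel
  · rw [sub_add_cancel_left, norm_neg, ← integral_const_mul, ← integral_const_mul]
    exact norm_integral_le_of_norm_le ((hker t ht).const_mul ε)
      ((ae_restrict_iff' (measurableSet_Ioi.inter hJ)).2 (Eventually.of_forall (hkernel t ht)))

theorem exists_solution_near_of_integrableOn_inter_Iio (hI : I.OrdConnected) {J : Set ℝ}
    (hJ : MeasurableSet J) (hJI : ∀ t ∈ I, J ∩ Iio t ⊆ I) (hIJ : ∀ t ∈ I, Ioi t ⊆ J)
    (hl : ContinuousOn l I)
    (hker : ∀ t ∈ I, IntegrableOn (fun s => Real.exp (∫ τ in s..t, (l τ).re)) (J ∩ Iio t))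
    {q φ : ℝ → ℂ} {ε : ℝ} (hq : ContinuousOn q I) (hqε : ∀ t ∈ I, ‖q t‖ ≤ ε)
    (hφ : ∀ t ∈ I, HasDerivWithinAt φ (l t * φ t + q t) I t) :
    ∃ x : ℝ → ℂ, (∀ t ∈ I, HasDerivWithinAt x (l t * x t) I t) ∧
      ∀ t ∈ I, ‖φ t - x t‖ ≤ ε * ∫ s in J ∩ Iio t, Real.exp (∫ τ in s..t, (l τ).re) := by
  have hmem : ∀ {S : Set ℝ} {t : ℝ}, t ∈ S → -t ∈ -S := fun h => by rwa [Set.mem_neg, neg_neg]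
  have hreflect : ∀ t, Ioi t ∩ -J = Neg.neg ⁻¹' (J ∩ Iio (-t)) := fun t => by
    rw [neg_preimage, inter_neg, neg_Iio, neg_neg, inter_comm]
  have hkernel : ∀ t s, Real.exp (-∫ τ in t..s, (-l (-τ)).re) =
      Real.exp (∫ τ in -s..-t, (l τ).re) := fun t s => by
    simp only [Complex.neg_re, intervalIntegral.integral_neg, neg_neg,
      intervalIntegral.integral_comp_neg fun τ => (l τ).re]
  have hneg := Measure.measurePreserving_neg (volume : Measure ℝ)
  obtain ⟨y, hy, hyφ⟩ := exists_solution_near_of_integrableOn_Ioi_inter (I := -I) (J := -J)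
    (l := fun s => -l (-s)) (q := fun s => -q (-s)) (φ := fun s => φ (-s)) hI.neg hJ.neg
    (fun t ht s hs => hJI (-t) ht (by rw [hreflect] at hs; exact hs))
    (fun t ht s hs => hIJ (-t) ht (mem_Ioi.2 (neg_lt_neg hs)))
    (hl.comp continuous_neg.continuousOn fun _ h => h).neg
    (fun t ht => by
      simp only [hkernel]
      rw [hreflect]
      exact (hneg.integrableOn_comp_preimage measurableEmbedding_neg).2 (hker (-t) ht))
    (hq.comp continuous_neg.continuousOn fun _ h => h).neg
    (fun t ht => by simpa using hqε (-t) ht)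
    (fun t ht => (hφ (-t) ht).comp_neg.congr_deriv (by ring))
  refine ⟨fun t => y (-t), fun t ht => ?_, fun t ht => ?_⟩
  · simpa using (hy (-t) (hmem ht)).comp_neg
  · have h := hyφ (-t) (hmem ht)
    simp only [hkernel, neg_neg, hreflect] at h
    rwa [hneg.setIntegral_preimage_emb measurableEmbedding_neg
      (fun s => Real.exp (∫ τ in s..t, (l τ).re))] at h

end ScalarEquation

theorem EReal.comap_coe_nhdsLT_neBot {b : EReal} (hb : ⊥ < b) :
    (comap ((↑) : ℝ → EReal) (𝓝[<] b)).NeBot := by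
  refine comap_neBot fun S hS => ?_
  obtain ⟨c, hcb, hcS⟩ := (mem_nhdsLT_iff_exists_Ioo_subset' hb).1 hS
  obtain ⟨x, hcx, hxb⟩ := EReal.lt_iff_exists_real_btwn.1 hcb
  exact ⟨x, hcS ⟨hcx, hxb⟩⟩

theorem EReal.comap_coe_nhdsGT_neBot {a : EReal} (ha : a < ⊤) :
    (comap ((↑) : ℝ → EReal) (𝓝[>] a)).NeBot := by
  refine comap_neBot fun S hS => ?_
  obtain ⟨c, hac, hcS⟩ := (mem_nhdsGT_iff_exists_Ioo_subset' ha).1 hS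
  obtain ⟨x, hax, hxc⟩ := EReal.lt_iff_exists_real_btwn.1 hac
  exact ⟨x, hcS ⟨hax, hxc⟩⟩

section ERealInterval

variable {a b : EReal} {I : Set ℝ}

theorem ordConnected_of_ereal_bounds
    (hI1 : ∀ x : ℝ, a < (x : EReal) → (x : EReal) < b → x ∈ I)
    (hI2 : ∀ x ∈ I, a ≤ (x : EReal) ∧ (x : EReal) ≤ b) : I.OrdConnected := by
  refine ⟨fun x hx y hy z hz => ?_⟩
  rcases hz.1.eq_or_lt with rfl | hxz
  · exact hx
  rcases hz.2.eq_or_lt with rfl | hzy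
  · exact hy
  exact hI1 z ((hI2 x hx).1.trans_lt (EReal.coe_lt_coe_iff.2 hxz))
    ((EReal.coe_lt_coe_iff.2 hzy).trans_le (hI2 y hy).2)

theorem eventually_mem_comap_coe_nhdsLT (hab : a < b)
    (hI1 : ∀ x : ℝ, a < (x : EReal) → (x : EReal) < b → x ∈ I) :
    ∀ᶠ t in comap ((↑) : ℝ → EReal) (𝓝[<] b), t ∈ I := by
  filter_upwards [preimage_mem_comap (mem_nhdsWithin_of_mem_nhds (lt_mem_nhds hab)),
    preimage_mem_comap self_mem_nhdsWithin] with t hat htb using hI1 t hat htb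

theorem eventually_mem_comap_coe_nhdsGT (hab : a < b)
    (hI1 : ∀ x : ℝ, a < (x : EReal) → (x : EReal) < b → x ∈ I) :
    ∀ᶠ t in comap ((↑) : ℝ → EReal) (𝓝[>] a), t ∈ I := by
  filter_upwards [preimage_mem_comap (mem_nhdsWithin_of_mem_nhds (gt_mem_nhds hab)),
    preimage_mem_comap self_mem_nhdsWithin] with t htb hat using hI1 t hat htb

theorem kappa13_pos {l1 l2 : ℝ → ℂ} {t : ℝ} (htb : (t : EReal) < b)
    (hker : IntegrableOn (fun s => Real.exp (-∫ τ in t..s, (l1 τ).re))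
      {s : ℝ | t < s ∧ (s : EReal) < b}) :
    0 < kappa13 a b l1 l2 t := by
  obtain ⟨u, htu, hub⟩ := EReal.lt_iff_exists_real_btwn.1 htb
  have hsub : Ioo t u ⊆ {s : ℝ | t < s ∧ (s : EReal) < b} :=
    fun s hs => ⟨hs.1, (EReal.coe_lt_coe_iff.2 hs.2).trans hub⟩
  have : NeZero (volume.restrict {s : ℝ | t < s ∧ (s : EReal) < b}) :=
    ⟨Measure.restrict_eq_zero.not.2 (((Real.volume_Ioo ▸ ENNReal.ofReal_pos.2
      (sub_pos.2 (EReal.coe_lt_coe_iff.1 htu))).trans_le (measure_mono hsub)).ne')⟩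
  exact (integral_exp_pos hker).trans_le (le_max_left _ _)

end ERealInterval

theorem hasDerivWithinAt_diagonal_mulVec_iff {l1 l2 : ℝ → ℂ} {x : ℝ → Fin 2 → ℂ} {s : Set ℝ}
    {t : ℝ} :
    HasDerivWithinAt x ((!![l1 t, 0; 0, l2 t]).mulVec (x t)) s t ↔
      HasDerivWithinAt (fun u => x u 0) (l1 t * x t 0) s t ∧
        HasDerivWithinAt (fun u => x u 1) (l2 t * x t 1) s t := by
  simp [hasDerivWithinAt_pi, Fin.forall_fin_two, Matrix.vecHead, Matrix.vecTail]

section Diagonal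

variable {a b : EReal} {I : Set ℝ} {l1 l2 : ℝ → ℂ}

theorem ulamStable2C_diagonal
    (hI1 : ∀ x : ℝ, a < (x : EReal) → (x : EReal) < b → x ∈ I)
    (hI2 : ∀ x ∈ I, a ≤ (x : EReal) ∧ (x : EReal) ≤ b)
    (hl1 : ContinuousOn l1 I) (hl2 : ContinuousOn l2 I)
    (hker1 : ∀ t ∈ I, IntegrableOn
      (fun s => Real.exp (-∫ τ in t..s, (l1 τ).re)) {s : ℝ | t < s ∧ (s : EReal) < b})
    (hker2 : ∀ t ∈ I, IntegrableOn
      (fun s => Real.exp (∫ τ in s..t, (l2 τ).re)) {s : ℝ | a < (s : EReal) ∧ s < t})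
    {K : ℝ} (hK : 0 < K) (hκ : ∀ t ∈ I, kappa13 a b l1 l2 t ≤ K) :
    UlamStable2C I (fun t => !![l1 t, 0; 0, l2 t]) K := by
  have hI := ordConnected_of_ereal_bounds hI1 hI2
  refine ⟨hK, fun ε hε φ φd hφ hφd hbound => ?_⟩
  have hφc : ContinuousOn φ I := fun t ht => (hφ t ht).continuousWithinAt
  have hres : ∀ i t, t ∈ I → ‖(φd t - (!![l1 t, 0; 0, l2 t]).mulVec (φ t)) i‖ ≤ ε :=
    fun i t ht => (norm_le_pi_norm _ i).trans (hbound t ht)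
  obtain ⟨x1, hx1, hx1φ⟩ := exists_solution_near_of_integrableOn_Ioi_inter hI
    (measurableSet_lt measurable_coe_real_ereal measurable_const)
    (fun t ht s hs => hI1 s ((hI2 t ht).1.trans_lt (EReal.coe_lt_coe_iff.2 hs.1)) hs.2)
    (fun t ht s hs => (EReal.coe_lt_coe_iff.2 hs).trans_le (hI2 t ht).2) hl1 hker1
    (q := fun t => φd t 0 - l1 t * φ t 0)
    ((continuous_apply 0).comp_continuousOn hφd |>.sub
      (hl1.mul ((continuous_apply 0).comp_continuousOn hφc)))
    (fun t ht => by simpa [Matrix.vecHead, Matrix.vecTail] using hres 0 t ht)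
    (fun t ht => (hasDerivWithinAt_pi.1 (hφ t ht) 0).congr_deriv (by ring))
  obtain ⟨x2, hx2, hx2φ⟩ := exists_solution_near_of_integrableOn_inter_Iio hI
    (measurableSet_lt measurable_const measurable_coe_real_ereal)
    (fun t ht s hs => hI1 s hs.1 ((EReal.coe_lt_coe_iff.2 hs.2).trans_le (hI2 t ht).2))
    (fun t ht s hs => (hI2 t ht).1.trans_lt (EReal.coe_lt_coe_iff.2 hs)) hl2 hker2
    (q := fun t => φd t 1 - l2 t * φ t 1)
    ((continuous_apply 1).comp_continuousOn hφd |>.sub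
      (hl2.mul ((continuous_apply 1).comp_continuousOn hφc)))
    (fun t ht => by simpa [Matrix.vecHead, Matrix.vecTail] using hres 1 t ht)
    (fun t ht => (hasDerivWithinAt_pi.1 (hφ t ht) 1).congr_deriv (by ring))
  refine ⟨fun t => ![x1 t, x2 t], fun t ht => hasDerivWithinAt_diagonal_mulVec_iff.2
    ⟨by simpa using hx1 t ht, by simpa using hx2 t ht⟩, fun t ht => ?_⟩
  refine (pi_norm_le_iff_of_nonneg (by positivity)).2 (Fin.forall_fin_two.2 ⟨?_, ?_⟩)
  · exact (hx1φ t ht).trans <| by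
      rw [mul_comm]; gcongr; exact (le_max_left _ _).trans (hκ t ht)
  · exact (hx2φ t ht).trans <| by
      rw [mul_comm]; gcongr; exact (le_max_right _ _).trans (hκ t ht)

theorem eqOn_of_diagonal_of_tendsto (hab : a < b)
    (hI1 : ∀ x : ℝ, a < (x : EReal) → (x : EReal) < b → x ∈ I)
    (hI2 : ∀ x ∈ I, a ≤ (x : EReal) ∧ (x : EReal) ≤ b)
    (hl1 : ContinuousOn l1 I) (hl2 : ContinuousOn l2 I) {t₀ : ℝ} (ht₀ : t₀ ∈ I)
    (h1 : Tendsto (fun t => ∫ s in t₀..t, (l1 s).re) (comap ((↑) : ℝ → EReal) (𝓝[<] b)) atTop)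
    (h2 : Tendsto (fun t => ∫ s in t₀..t, (l2 s).re) (comap ((↑) : ℝ → EReal) (𝓝[>] a)) atTop)
    {x y : ℝ → Fin 2 → ℂ}
    (hx : ∀ t ∈ I, HasDerivWithinAt x ((!![l1 t, 0; 0, l2 t]).mulVec (x t)) I t)
    (hy : ∀ t ∈ I, HasDerivWithinAt y ((!![l1 t, 0; 0, l2 t]).mulVec (y t)) I t) {C : ℝ}
    (hC : ∀ t ∈ I, ‖y t - x t‖ ≤ C) : EqOn y x I := by
  have hI := ordConnected_of_ereal_bounds hI1 hI2
  have hz : ∀ t ∈ I, HasDerivWithinAt (fun u => y u - x u)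
      ((!![l1 t, 0; 0, l2 t]).mulVec (y t - x t)) I t := fun t ht =>
    ((hy t ht).sub (hx t ht)).congr_deriv (Matrix.mulVec_sub _ _ _).symm
  have hC' : ∀ i, ∀ t ∈ I, ‖y t i - x t i‖ ≤ C :=
    fun i t ht => (norm_le_pi_norm (y t - x t) i).trans (hC t ht)
  have := EReal.comap_coe_nhdsLT_neBot (bot_le.trans_lt hab)
  have := EReal.comap_coe_nhdsGT_neBot (hab.trans_le le_top)
  have hz0 := eqOn_zero_of_tendsto_integral_re hI hl1
    (fun t ht => (hasDerivWithinAt_diagonal_mulVec_iff.1 (hz t ht)).1) (hC' 0)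
    (eventually_mem_comap_coe_nhdsLT hab hI1) ht₀ h1
  have hz1 := eqOn_zero_of_tendsto_integral_re hI hl2
    (fun t ht => (hasDerivWithinAt_diagonal_mulVec_iff.1 (hz t ht)).2) (hC' 1)
    (eventually_mem_comap_coe_nhdsGT hab hI1) ht₀ h2
  intro t ht
  ext i
  fin_cases i
  · exact sub_eq_zero.1 (hz0 ht)
  · exact sub_eq_zero.1 (hz1 ht)

end Diagonal

theorem statement5 (a b : EReal) (hab : a < b) (I : Set ℝ)
    (hI1 : ∀ x : ℝ, a < (x : EReal) → (x : EReal) < b → x ∈ I)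
    (hI2 : ∀ x ∈ I, a ≤ (x : EReal) ∧ (x : EReal) ≤ b)
    (l1 l2 : ℝ → ℂ) (hl1 : ContinuousOn l1 I) (hl2 : ContinuousOn l2 I)
    (hker1 : ∀ t ∈ I, IntegrableOn
      (fun s => Real.exp (-∫ τ in t..s, (l1 τ).re)) {s : ℝ | t < s ∧ (s : EReal) < b})
    (hker2 : ∀ t ∈ I, IntegrableOn
      (fun s => Real.exp (∫ τ in s..t, (l2 τ).re)) {s : ℝ | a < (s : EReal) ∧ s < t})
    (hbdd : BddAbove (kappa13 a b l1 l2 '' I)) :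
    UlamStable2C I (fun t => !![l1 t, 0; 0, l2 t]) (sSup (kappa13 a b l1 l2 '' I)) ∧
    ((∀ t₀ : ℝ, a < (t₀ : EReal) → (t₀ : EReal) < b →
        (Tendsto (fun t => ∫ s in t₀..t, (l1 s).re)
          (Filter.comap (fun x : ℝ => (x : EReal)) (nhdsWithin b (Iio b))) atTop) ∧
        (Tendsto (fun t => ∫ s in t₀..t, (l2 s).re)
          (Filter.comap (fun x : ℝ => (x : EReal)) (nhdsWithin a (Ioi a))) atTop)) →
      ∀ ε : ℝ, 0 < ε → ∀ φ φd : ℝ → Fin 2 → ℂ,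
        (∀ t ∈ I, HasDerivWithinAt φ (φd t) I t) →
        ContinuousOn φd I →
        (∀ t ∈ I, ‖φd t - (!![l1 t, 0; 0, l2 t]).mulVec (φ t)‖ ≤ ε) →
        ∃ x : ℝ → Fin 2 → ℂ,
          ((∀ t ∈ I, HasDerivWithinAt x ((!![l1 t, 0; 0, l2 t]).mulVec (x t)) I t) ∧
            ∀ t ∈ I, ‖φ t - x t‖ ≤ sSup (kappa13 a b l1 l2 '' I) * ε) ∧
          ∀ y : ℝ → Fin 2 → ℂ,
            ((∀ t ∈ I, HasDerivWithinAt y ((!![l1 t, 0; 0, l2 t]).mulVec (y t)) I t) ∧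
              ∀ t ∈ I, ‖φ t - y t‖ ≤ sSup (kappa13 a b l1 l2 '' I) * ε) →
            EqOn y x I) := by
  obtain ⟨t₀, ht₀a, ht₀b⟩ := EReal.lt_iff_exists_real_btwn.1 hab
  have ht₀ : t₀ ∈ I := hI1 t₀ ht₀a ht₀b
  have hκ : ∀ t ∈ I, kappa13 a b l1 l2 t ≤ sSup (kappa13 a b l1 l2 '' I) :=
    fun t ht => le_csSup hbdd (mem_image_of_mem _ ht)
  have hstable := ulamStable2C_diagonal hI1 hI2 hl1 hl2 hker1 hker2
    ((kappa13_pos ht₀b (hker1 t₀ ht₀)).trans_le (hκ t₀ ht₀)) hκ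
  refine ⟨hstable, fun htend ε hε φ φd hφ hφd hbound => ?_⟩
  obtain ⟨x, hx, hxφ⟩ := hstable.2 ε hε φ φd hφ hφd hbound
  refine ⟨x, ⟨hx, hxφ⟩, fun y ⟨hy, hyφ⟩ => ?_⟩
  refine eqOn_of_diagonal_of_tendsto hab hI1 hI2 hl1 hl2 ht₀ (htend t₀ ht₀a ht₀b).1
    (htend t₀ ht₀a ht₀b).2 hx hy (C := 2 * (sSup (kappa13 a b l1 l2 '' I) * ε)) fun t ht => ?_
  have hyx := norm_sub_le_norm_sub_add_norm_sub (y t) (φ t) (x t)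
  rw [norm_sub_rev (y t) (φ t)] at hyx
  linarith [hxφ t ht, hyφ t ht]
end
end

section
/- Let λ₁, λ₂ ∈ ℂ with Re(λ₁)·Re(λ₂) ≠ 0, and let A be the constant diagonal matrix with entries λ₁, λ₂. Then the system x' = Ax is Ulam stable on ℝ with respect to the maximum norm on ℂ², and its best (minimal) Ulam constant is K_{c1} := max{ 1/|Re λ₁|, 1/|Re λ₂| }; that is, K_{c1} is an Ulam constant for x' = Ax on ℝ and every Ulam constant K for x' = Ax on ℝ satisfies K ≥ K_{c1}. -/
/-! Componentwise the system is the scalar equation `x' = λ x`. If `Re λ > 0` and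
`‖φ' - λ φ‖ ≤ ε`, then `g t = e^{-λ t} φ t` has `‖g' t‖ ≤ ε e^{-Re λ t}`, so `g` converges at `+∞`
to some `c` with `‖g t - c‖ ≤ ε e^{-Re λ t} / Re λ`, i.e. `‖φ t - e^{λ t} c‖ ≤ ε / Re λ`; for
`Re λ < 0` reflect time. Conversely `p t = e^{i Im λ t} / Re λ` has `‖p' - λ p‖ = 1`, and the only
solution at bounded distance from the bounded `p` is `0`, since every other one grows
exponentially in one time direction; hence every Ulam constant is at least `‖p t‖ = 1 / |Re λ|`. -/

open MeasureTheory Filter Set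

noncomputable section

open Topology Complex

theorem hasDerivAt_cexp_mul_ofReal (l : ℂ) (t : ℝ) :
    HasDerivAt (fun s : ℝ => cexp (l * s)) (l * cexp (l * t)) t := by
  simpa [mul_comm] using ((hasDerivAt_mul_const l).comp_ofReal (z := t)).cexp

theorem norm_cexp_mul_ofReal (l : ℂ) (t : ℝ) : ‖cexp (l * t)‖ = Real.exp (l.re * t) := by
  simp [Complex.norm_exp]

theorem exists_norm_sub_le_of_norm_deriv_le_exp {F : Type*} [NormedAddCommGroup F]
    [NormedSpace ℝ F] [CompleteSpace F] {g g' : ℝ → F} {b ε : ℝ} (hb : 0 < b)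
    (hg : ∀ t, HasDerivAt g (g' t) t) (hg' : ∀ t, ‖g' t‖ ≤ ε * Real.exp (-b * t)) :
    ∃ L, ∀ t, ‖g t - L‖ ≤ ε * Real.exp (-b * t) / b := by
  set r : ℝ → ℝ := fun t => ε * Real.exp (-b * t) / b with hr_def
  have hε : 0 ≤ ε := nonneg_of_mul_nonneg_left ((norm_nonneg _).trans (hg' 0)) (Real.exp_pos _)
  have hr : ∀ t, HasDerivAt r (-(ε * Real.exp (-b * t))) t := fun t => by
    have := (((hasDerivAt_id t).const_mul (-b)).exp.const_mul ε).div_const b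
    exact this.congr_deriv (by simp only [id]; field_simp)
  have htail : ∀ t s, t ≤ s → ‖g s - g t‖ ≤ r t := fun t s hts => by
    have := image_norm_le_of_norm_deriv_right_le_deriv_boundary (f := fun u => g u - g t)
      (B := fun u => r t - r u)
      (fun u _ => ((hg u).sub_const (g t)).continuousAt.continuousWithinAt)
      (fun u _ => ((hg u).sub_const (g t)).hasDerivWithinAt) (by simp)
      (fun u => by simpa using (hr u).const_sub (r t)) (fun u _ => hg' u) ⟨hts, le_rfl⟩
    have : 0 ≤ r s := by positivity
    linarith
  have hr0 : Tendsto r atTop (𝓝 0) := by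
    simpa [hr_def] using ((Real.tendsto_exp_atBot.comp
      (tendsto_id.const_mul_atTop_of_neg (neg_neg_iff_pos.2 hb))).const_mul ε).div_const b
  obtain ⟨L, hL⟩ := cauchySeq_tendsto_of_complete <|
    cauchySeq_of_le_tendsto_0' (s := g) r
      (fun t s hts => by rw [dist_eq_norm']; exact htail t s hts) hr0
  refine ⟨L, fun t => ?_⟩
  rw [norm_sub_rev]
  exact le_of_tendsto ((hL.sub_const (g t)).norm) <|
    (eventually_ge_atTop t).mono fun s hs => htail t s hs

variable {E : Type*} [NormedAddCommGroup E] [NormedSpace ℂ E]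

theorem hasDerivAt_cexp_neg_mul_smul {l : ℂ} {φ : ℝ → E} {v : E} {t : ℝ} (hφ : HasDerivAt φ v t) :
    HasDerivAt (fun s : ℝ => cexp (-l * s) • φ s) (cexp (-l * t) • (v - l • φ t)) t := by
  refine ((hasDerivAt_cexp_mul_ofReal (-l) t).smul hφ).congr_deriv ?_
  module

theorem eq_cexp_mul_smul_of_hasDerivAt {l : ℂ} {x : ℝ → E} (hx : ∀ t, HasDerivAt x (l • x t) t)
    (t : ℝ) : x t = cexp (l * t) • x 0 := by
  have hderiv s := hasDerivAt_cexp_neg_mul_smul (l := l) (hx s)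
  have hconst := is_const_of_deriv_eq_zero (fun s => (hderiv s).differentiableAt)
    (fun s => by simpa using (hderiv s).deriv) t 0
  simp only [Complex.ofReal_zero, mul_zero, Complex.exp_zero, one_smul] at hconst
  rw [← hconst, smul_smul, ← Complex.exp_add]
  simp

theorem exists_norm_sub_cexp_mul_smul_le_of_re_pos [CompleteSpace E] {l : ℂ} (hl : 0 < l.re)
    {φ φ' : ℝ → E} {ε : ℝ} (hφ : ∀ t, HasDerivAt φ (φ' t) t) (hε : ∀ t, ‖φ' t - l • φ t‖ ≤ ε) :
    ∃ c : E, ∀ t : ℝ, ‖φ t - cexp (l * t) • c‖ ≤ ε / l.re := by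
  obtain ⟨c, hc⟩ := exists_norm_sub_le_of_norm_deriv_le_exp hl
    (fun t => hasDerivAt_cexp_neg_mul_smul (l := l) (hφ t)) fun t => by
      rw [norm_smul, norm_cexp_mul_ofReal, mul_comm, neg_re]
      exact mul_le_mul_of_nonneg_right (hε t) (Real.exp_pos _).le
  refine ⟨c, fun t => ?_⟩
  have hsplit : φ t - cexp (l * t) • c = cexp (l * t) • (cexp (-l * t) • φ t - c) := by
    rw [smul_sub, smul_smul, ← Complex.exp_add]
    simp
  calc ‖φ t - cexp (l * t) • c‖ = Real.exp (l.re * t) * ‖cexp (-l * t) • φ t - c‖ := by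
        rw [hsplit, norm_smul, norm_cexp_mul_ofReal]
    _ ≤ Real.exp (l.re * t) * (ε * Real.exp (-l.re * t) / l.re) := by gcongr; exact hc t
    _ = ε / l.re := by
        rw [mul_div_assoc', mul_left_comm, ← Real.exp_add]
        simp

theorem exists_norm_sub_cexp_mul_smul_le [CompleteSpace E] {l : ℂ} (hl : l.re ≠ 0)
    {φ φ' : ℝ → E} {ε : ℝ} (hφ : ∀ t, HasDerivAt φ (φ' t) t) (hε : ∀ t, ‖φ' t - l • φ t‖ ≤ ε) :
    ∃ c : E, ∀ t : ℝ, ‖φ t - cexp (l * t) • c‖ ≤ ε / |l.re| := by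
  rcases hl.lt_or_gt with hneg | hpos
  · have hφ_neg : ∀ t, HasDerivAt (fun s => φ (-s)) (-φ' (-t)) t := fun t => by
      simpa [Function.comp_def] using (hφ (-t)).scomp t (hasDerivAt_neg t)
    obtain ⟨c, hc⟩ := exists_norm_sub_cexp_mul_smul_le_of_re_pos (l := -l) (by simpa using hneg)
      hφ_neg fun t => by
        rw [neg_smul, sub_neg_eq_add, neg_add_eq_sub, norm_sub_rev]
        exact hε (-t)
    refine ⟨c, fun t => ?_⟩
    simpa [abs_of_neg hneg] using hc (-t)
  · simpa [abs_of_pos hpos] using exists_norm_sub_cexp_mul_smul_le_of_re_pos hpos hφ hε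

theorem eq_zero_of_hasDerivAt_smul_self_of_norm_le {l : ℂ} (hl : l.re ≠ 0) {x : ℝ → E}
    (hx : ∀ t, HasDerivAt x (l • x t) t) {M : ℝ} (hM : ∀ t, ‖x t‖ ≤ M) (t : ℝ) : x t = 0 := by
  suffices x 0 = 0 by rw [eq_cexp_mul_smul_of_hasDerivAt hx t, this, smul_zero]
  by_contra hx0
  have hpos : 0 < ‖x 0‖ := norm_pos_iff.2 hx0
  -- `exp s ≥ s + 1` at `s = M / ‖x 0‖` pushes the solution above `M`
  have hgrow := Real.add_one_le_exp (M / ‖x 0‖)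
  have hnorm := hM (M / (l.re * ‖x 0‖))
  have hexponent : l.re * (M / (l.re * ‖x 0‖)) = M / ‖x 0‖ := by field_simp
  rw [eq_cexp_mul_smul_of_hasDerivAt hx, norm_smul, norm_cexp_mul_ofReal, hexponent] at hnorm
  have := mul_le_mul_of_nonneg_right hgrow hpos.le
  rw [add_mul, div_mul_cancel₀ _ hpos.ne'] at this
  linarith

theorem ulamStable2C_diagonal_s9 {d : Fin 2 → ℂ} (hd : ∀ i, (d i).re ≠ 0) {K : ℝ}
    (hK : ∀ i, 1 / |(d i).re| ≤ K) : UlamStable2C univ (fun _ => Matrix.diagonal d) K := by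
  have hK0 : 0 < K := (one_div_pos.2 (abs_pos.2 (hd 0))).trans_le (hK 0)
  refine ⟨hK0, fun ε hε φ φ' hφ _ hbound => ?_⟩
  have hφ_at : ∀ t, HasDerivAt φ (φ' t) t := fun t => hasDerivWithinAt_univ.1 (hφ t trivial)
  choose c hc using fun i => exists_norm_sub_cexp_mul_smul_le (hd i)
    (fun t => hasDerivAt_pi.1 (hφ_at t) i) fun t => by
      simpa only [Pi.sub_apply, Matrix.mulVec_diagonal, smul_eq_mul] using
        (norm_le_pi_norm _ i).trans (hbound t trivial)
  refine ⟨fun t i => cexp (d i * t) • c i, fun t _ => ?_, fun t _ => ?_⟩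
  · refine hasDerivWithinAt_univ.2 (hasDerivAt_pi.2 fun i => ?_)
    simpa [Matrix.mulVec_diagonal, mul_assoc] using
      (hasDerivAt_cexp_mul_ofReal (d i) t).smul_const (c i)
  · refine (pi_norm_le_iff_of_nonneg (mul_pos hK0 hε).le).2 fun i => (hc i t).trans ?_
    calc ε / |(d i).re| = 1 / |(d i).re| * ε := by ring
      _ ≤ K * ε := by gcongr; exact hK i

theorem one_div_abs_re_le_of_ulamStable2C_diagonal {d : Fin 2 → ℂ} {i : Fin 2}
    (hi : (d i).re ≠ 0) {K : ℝ} (hK : UlamStable2C univ (fun _ => Matrix.diagonal d) K) :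
    1 / |(d i).re| ≤ K := by
  set l := d i
  -- `p t = e^{i (Im l) t} / Re l`
  set p : ℝ → ℂ := fun t => cexp ((l - l.re) * t) / l.re
  have hp : ∀ t, HasDerivAt p ((l - l.re) * p t) t := fun t => by
    simpa [p, mul_div_assoc] using (hasDerivAt_cexp_mul_ofReal (l - l.re) t).div_const (l.re : ℂ)
  have hp_norm : ∀ t, ‖p t‖ = 1 / |l.re| := fun t => by
    rw [norm_div, norm_cexp_mul_ofReal, Complex.norm_real, Real.norm_eq_abs]
    simp
  have hdefect : ∀ t, ‖(l - l.re) * p t - l * p t‖ = 1 := fun t => by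
    rw [← sub_mul, sub_sub_cancel_left, norm_mul, norm_neg, hp_norm, Complex.norm_real,
      Real.norm_eq_abs, mul_one_div_cancel (abs_ne_zero.2 hi)]
  have hp_cont : Continuous p := continuous_iff_continuousAt.2 fun t => (hp t).continuousAt
  obtain ⟨x, hx, hxφ⟩ := hK.2 1 one_pos (fun t => Pi.single i (p t))
    (fun t => Pi.single i ((l - l.re) * p t))
    (fun t _ => hasDerivWithinAt_univ.2 <| hasDerivAt_pi.2 fun j => by
      rcases eq_or_ne j i with rfl | hj
      · simpa using hp t
      · simpa [hj] using hasDerivAt_const t (0 : ℂ))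
    ((continuous_single i).comp (continuous_const.mul hp_cont)).continuousOn
    (fun t _ => by
      rw [Matrix.diagonal_mulVec_single, ← Pi.single_sub, Pi.norm_single, hdefect])
  have hxi : ∀ t, HasDerivAt (fun s => x s i) (l • x t i) t := fun t => by
    simpa only [Matrix.mulVec_diagonal, smul_eq_mul] using
      hasDerivAt_pi.1 (hasDerivWithinAt_univ.1 (hx t trivial)) i
  have hclose : ∀ t, ‖p t - x t i‖ ≤ K := fun t => by
    simpa using (norm_le_pi_norm _ i).trans (hxφ t trivial)
  have hxi_zero := eq_zero_of_hasDerivAt_smul_self_of_norm_le hi hxi (M := 1 / |l.re| + K)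
    fun t => calc ‖x t i‖ ≤ ‖p t‖ + ‖p t - x t i‖ := norm_le_norm_add_norm_sub _ _
      _ ≤ 1 / |l.re| + K := by rw [hp_norm]; gcongr; exact hclose t
  simpa [hxi_zero 0, hp_norm] using hclose 0

theorem statement9 (l1 l2 : ℂ) (h : l1.re * l2.re ≠ 0) :
    UlamStable2C Set.univ (fun _ => !![l1, 0; 0, l2])
      (max (1 / |l1.re|) (1 / |l2.re|)) ∧
    ∀ K : ℝ, UlamStable2C Set.univ (fun _ => !![l1, 0; 0, l2]) K →
      max (1 / |l1.re|) (1 / |l2.re|) ≤ K := by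
  obtain ⟨h1, h2⟩ := mul_ne_zero_iff.1 h
  rw [← Matrix.diagonal_vec2]
  refine ⟨ulamStable2C_diagonal_s9 (Fin.forall_fin_two.2 ⟨h1, h2⟩)
    (Fin.forall_fin_two.2 ⟨le_max_left _ _, le_max_right _ _⟩), fun K hK => max_le ?_ ?_⟩
  · exact one_div_abs_re_le_of_ulamStable2C_diagonal (i := 0) h1 hK
  · exact one_div_abs_re_le_of_ulamStable2C_diagonal (i := 1) h2 hK
end
end
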